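/- arXiv:2306.16370 — 3 statements merged into one kernel-verified Lean document; each statement's English description precedes it below -/
import Mathlib

section
/- A tree is non-reversible if and only if it contains a critical node or an archetypical subtree. -/
/- A tree is a partial order in which the set of strict predecessors of every
element is well-ordered. Basic vocabulary: condensations, automorphisms,
reversibility, heights, levels, nodes, upward closures, branches. -/

universe u v

/- The height of an element `t`: the order type of the set `(·,t)` of its strict
predecessors (which is well-ordered when the order is a tree). -/
open Classical in
noncomputable def treeHt {T : Type u} [PartialOrder T] (t : T) : Ordinal.{u} :=
  if h : IsWellOrder {s : T // s < t} (fun a b => (a : T) < (b : T)) then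
    @Ordinal.type {s : T // s < t} (fun a b => (a : T) < (b : T)) h
  else 0

/-- A partial order is a tree iff every set `(·,t)` is well-ordered by `<`. -/
def IsTree (T : Type u) [PartialOrder T] : Prop :=
  ∀ t : T, IsWellOrder {s : T // s < t} (fun a b => (a : T) < (b : T))

/-- A condensation: a bijective endomorphism. -/
def IsCond {T : Type u} [PartialOrder T] (f : T → T) : Prop :=
  Function.Bijective f ∧ ∀ s t : T, s < t → f s < f t

/-- An automorphism: a bijection preserving and reflecting `<`. -/
def IsAuto {T : Type u} [PartialOrder T] (f : T → T) : Prop :=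
  Function.Bijective f ∧ ∀ s t : T, s < t ↔ f s < f t

/-- A structure is reversible iff every condensation is an automorphism. -/
def Reversible (T : Type u) [PartialOrder T] : Prop :=
  ∀ f : T → T, IsCond f → IsAuto f

/-- The `α`-th level: elements of height `α`. -/
def level (T : Type u) [PartialOrder T] (α : Ordinal.{u}) : Set T :=
  {t : T | treeHt t = α}

/-- The height of the tree: the least ordinal `α` with `L_α = ∅`. -/
noncomputable def treeHeight (T : Type u) [PartialOrder T] : Ordinal.{u} :=
  sInf {α : Ordinal.{u} | level T α = ∅}

/-- Nodes: equivalence classes of the relation `s ∼ t` iff `(·,s) = (·,t)`. -/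
def IsNode {T : Type u} [PartialOrder T] (N : Set T) : Prop :=
  ∃ t : T, N = {s : T | Set.Iio s = Set.Iio t}

/-- `S↑`, the upward closure of `S`. -/
def upClo {T : Type u} [PartialOrder T] (S : Set T) : Set T :=
  {t : T | ∃ s ∈ S, s ≤ t}

/-- A branch: a maximal chain. -/
def IsBranch {T : Type u} [PartialOrder T] (b : Set T) : Prop :=
  IsMaxChain (· ≤ ·) b

/- The height (order type) of a chain (junk value `0` if not well-ordered;
in a tree every chain is well-ordered). -/
open Classical in
noncomputable def chainHt {T : Type u} [PartialOrder T] (b : Set T) : Ordinal.{u} :=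
  if h : IsWellOrder b (fun x y : b => (x : T) < (y : T)) then
    @Ordinal.type b (fun x y : b => (x : T) < (y : T)) h
  else 0

/-- A node `N` is critical iff there are a condensation `g` of the tree `N↑`
and `a ∈ N` with `ht_{N↑}(a) < ht_{N↑}(g(a))` (heights computed in `N↑`). -/
def IsCriticalNode {T : Type u} [PartialOrder T] (N : Set T) : Prop :=
  IsNode N ∧ ∃ g : ↥(upClo N) → ↥(upClo N), IsCond g ∧
    ∃ a : ↥(upClo N), (a : T) ∈ N ∧ treeHt a < treeHt (g a)

/-- `T₁` has an archetypical subtree: there is a suborder `A` of `T₁` of the form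
`A = ⋃_{n∈ℤ} (P_n ∪ {a_n, b_n})` such that (computing heights inside the tree `A`):
(a1) `ht(A) = α + 2` for some ordinal `α > 0`;
(a2) the `P_n` are pairwise distinct branches (maximal chains) of `A|α`, each of
height `α`;
(a3) `T_n = {a_n, b_n}` has two elements and every element of `P_n` is strictly
below `a_n` and `b_n`;
(a4) `a_n ∥ b_n` for `n ≤ 0` and `a_n < b_n` for `n > 0`;
(a5) there is an automorphism `g` of `A|α` with `g[P_n] = P_{n+1}` for all `n`
(bundled as the restriction of the map `F` below);
and moreover `(·,a_0)` and `(·,b_0)` computed in `T₁` both equal `P_0`, and the map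
`F_g := g ∪ {a_n ↦ a_{n+1}} ∪ {b_n ↦ b_{n+1}}` extends to a condensation of `T₁`. -/
def HasArchetypicalSubtree (T₁ : Type u) [PartialOrder T₁] : Prop :=
  ∃ (A : Set T₁) (P : ℤ → Set ↥A) (a b : ℤ → ↥A) (α : Ordinal.{u}) (F : ↥A → ↥A),
    -- `A = ⋃_{n∈ℤ} (P_n ∪ T_n)`
    (∀ t : ↥A, (∃ n, t ∈ P n) ∨ (∃ n, t = a n) ∨ (∃ n, t = b n)) ∧
    -- (a1)
    0 < α ∧ treeHeight ↥A = α + 2 ∧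
    -- (a2)
    (∀ m n : ℤ, m ≠ n → P m ≠ P n) ∧
    (∀ n : ℤ, P n ⊆ {t : ↥A | treeHt t < α}) ∧
    (∀ n : ℤ, IsChain (· ≤ ·) (P n) ∧
      ∀ C : Set ↥A, IsChain (· ≤ ·) C → C ⊆ {t : ↥A | treeHt t < α} →
        P n ⊆ C → C = P n) ∧
    (∀ n : ℤ, chainHt (P n) = α) ∧
    -- (a3)
    (∀ n : ℤ, a n ≠ b n) ∧
    (∀ n : ℤ, ∀ t ∈ P n, t < a n ∧ t < b n) ∧
    -- (a4)
    (∀ n : ℤ, n ≤ 0 → ¬ a n < b n ∧ ¬ b n < a n) ∧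
    (∀ n : ℤ, 0 < n → a n < b n) ∧
    -- (a5): the restriction `g := F↾(A|α)` is an automorphism of `A|α` with
    -- `g[P_n] = P_{n+1}`
    Set.BijOn F {t : ↥A | treeHt t < α} {t : ↥A | treeHt t < α} ∧
    (∀ s t : ↥A, treeHt s < α → treeHt t < α → (s < t ↔ F s < F t)) ∧
    (∀ n : ℤ, F '' P n = P (n + 1)) ∧
    -- `F = F_g` on the sets `T_n`
    (∀ n : ℤ, F (a n) = a (n + 1) ∧ F (b n) = b (n + 1)) ∧
    -- subtree conditions in `T₁`
    Set.Iio ((a 0 : T₁)) = Subtype.val '' (P 0) ∧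
    Set.Iio ((b 0 : T₁)) = Subtype.val '' (P 0) ∧
    ∃ f : T₁ → T₁, IsCond f ∧ ∀ t : ↥A, f (t : T₁) = (F t : T₁)

/-! ### Auxiliary general lemmas about trees -/

section TreeLemmas

variable {X : Type v} [PartialOrder X]

theorem treeHt_eq (hX : IsTree X) (t : X) :
    treeHt t = @Ordinal.type {s : X // s < t} (fun a b => (a : X) < (b : X)) (hX t) :=
  dif_pos (hX t)

theorem lt_comparable (hX : IsTree X) {a b t : X} (ha : a < t) (hb : b < t) :
    a < b ∨ a = b ∨ b < a := by
  rcases @trichotomous _ _ (hX t).toTrichotomous ⟨a, ha⟩ ⟨b, hb⟩ with h | h | h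
  · exact Or.inl h
  · exact Or.inr (Or.inl (congrArg Subtype.val h))
  · exact Or.inr (Or.inr h)

theorem treeHt_eq_typein (hX : IsTree X) {u t : X} (h : u < t) :
    treeHt u = @Ordinal.typein {s : X // s < t} (fun a b => (a : X) < (b : X)) (hX t) ⟨u, h⟩ := by
  haveI := hX t; haveI := hX u
  rw [treeHt_eq hX u, ← Ordinal.type_subrel]
  exact RelIso.ordinal_type_eq
    ⟨⟨fun s => ⟨⟨s.1, lt_trans s.2 h⟩, s.2⟩, fun b => ⟨b.1.1, b.2⟩,
      fun s => rfl, fun b => rfl⟩, Iff.rfl⟩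

theorem treeHt_lt_of_lt (hX : IsTree X) {u t : X} (h : u < t) : treeHt u < treeHt t := by
  haveI := hX t
  rw [treeHt_eq_typein hX h, treeHt_eq hX t]
  exact Ordinal.typein_lt_type _ _

theorem exists_pred (hX : IsTree X) {t : X} {β : Ordinal} (hβ : β < treeHt t) :
    ∃ u, u < t ∧ treeHt u = β := by
  haveI := hX t
  rw [treeHt_eq hX t] at hβ
  obtain ⟨a, ha⟩ := Ordinal.typein_surj _ hβ
  exact ⟨a.1, a.2, (treeHt_eq_typein hX a.2).trans ha⟩

theorem eq_of_ht_eq (hX : IsTree X) {u v t : X} (hu : u < t) (hv : v < t)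
    (h : treeHt u = treeHt v) : u = v := by
  rcases lt_comparable hX hu hv with h' | h' | h'
  · exact absurd h (ne_of_lt (treeHt_lt_of_lt hX h'))
  · exact h'
  · exact absurd h.symm (ne_of_lt (treeHt_lt_of_lt hX h'))

theorem ht_le_cond (hX : IsTree X) {f : X → X} (hf : IsCond f) (t : X) :
    treeHt t ≤ treeHt (f t) := by
  haveI := hX t; haveI := hX (f t)
  rw [treeHt_eq hX t, treeHt_eq hX (f t)]
  refine RelEmbedding.ordinal_type_le
    ⟨⟨fun s => ⟨f s.1, hf.2 _ _ s.2⟩, fun s₁ s₂ hss => ?_⟩, @fun s₁ s₂ => ?_⟩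
  · exact Subtype.ext (hf.1.1 (congrArg Subtype.val hss))
  · constructor
    · intro hlt
      rcases lt_comparable hX s₁.2 s₂.2 with h' | h' | h'
      · exact Subtype.mk_lt_mk.2 h'
      · exact absurd (Subtype.ext h' : s₁ = s₂) (by rintro rfl; exact lt_irrefl _ hlt)
      · exact absurd (hf.2 _ _ h') (lt_asymm hlt)
    · intro hlt
      exact hf.2 _ _ hlt

theorem treeHt_eq_zero {t : X} (h : ∀ s, ¬ s < t) : treeHt t = 0 := by
  unfold treeHt
  split
  · haveI : IsEmpty {s : X // s < t} := ⟨fun s => h s.1 s.2⟩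
    exact Ordinal.type_eq_zero_of_empty _
  · rfl

theorem treeHt_pos (hX : IsTree X) {s t : X} (h : s < t) : 0 < treeHt t :=
  lt_of_le_of_lt zero_le (treeHt_lt_of_lt hX h)

theorem treeHt_congr (hX : IsTree X) {s t : X} (h : Set.Iio s = Set.Iio t) :
    treeHt s = treeHt t := by
  haveI := hX s; haveI := hX t
  rw [treeHt_eq hX s, treeHt_eq hX t]
  have h1 : ∀ u : X, u < s ↔ u < t := fun u =>
    ⟨fun hu => (h ▸ hu : u ∈ Set.Iio t), fun hu => (h.symm ▸ hu : u ∈ Set.Iio s)⟩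
  exact RelIso.ordinal_type_eq
    ⟨⟨fun a => ⟨a.1, (h1 a.1).1 a.2⟩, fun a => ⟨a.1, (h1 a.1).2 a.2⟩,
      fun a => rfl, fun a => rfl⟩, Iff.rfl⟩

theorem treeHt_le_of (hX : IsTree X) {t : X} {γ : Ordinal}
    (h : ∀ s, s < t → treeHt s < γ) : treeHt t ≤ γ := by
  by_contra hc
  push_neg at hc
  obtain ⟨u, hu, hht⟩ := exists_pred hX hc
  exact lt_irrefl γ (hht ▸ h u hu)

theorem le_treeHt_of (hX : IsTree X) {t : X} {γ : Ordinal}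
    (h : ∀ β, β < γ → ∃ s, s < t ∧ treeHt s = β) : γ ≤ treeHt t := by
  by_contra hc
  push_neg at hc
  obtain ⟨s, hs, heq⟩ := h _ hc
  exact lt_irrefl _ (heq ▸ treeHt_lt_of_lt hX hs)

theorem cond_reflect (hX : IsTree X) {f : X → X} (hf : IsCond f) {γ : Ordinal}
    (hpres : ∀ u, treeHt u < γ → treeHt (f u) = treeHt u)
    {s t : X} (ht : treeHt t < γ) (hlt : f s < f t) : s < t := by
  have hft : treeHt (f t) = treeHt t := hpres t ht
  have hfs : treeHt (f s) < treeHt t := hft ▸ treeHt_lt_of_lt hX hlt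
  obtain ⟨z, hz, hzht⟩ := exists_pred hX hfs
  have hzγ : treeHt z < γ := lt_trans (hzht ▸ hfs) ht
  have h1 : treeHt (f z) = treeHt (f s) := by rw [hpres z hzγ, hzht]
  have h2 : f z = f s := eq_of_ht_eq hX (hf.2 _ _ hz) hlt h1
  have : z = s := hf.1.1 h2
  exact this ▸ hz

theorem cond_surj_low (hX : IsTree X) {f : X → X} (hf : IsCond f) {γ : Ordinal}
    (hpres : ∀ u, treeHt u < γ → treeHt (f u) = treeHt u)
    {t : X} (ht : treeHt t < γ) : ∃ s, f s = t ∧ treeHt s = treeHt t := by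
  obtain ⟨s, hs⟩ := hf.1.2 t
  have h1 : treeHt s ≤ treeHt t := hs ▸ ht_le_cond hX hf s
  have h2 : treeHt (f s) = treeHt s := hpres s (lt_of_le_of_lt h1 ht)
  exact ⟨s, hs, by rw [← hs, h2]⟩

theorem exists_raise (hX : IsTree X) {f : X → X} (hf : IsCond f) (hna : ¬ IsAuto f) :
    ∃ x, treeHt x < treeHt (f x) := by
  by_contra h
  push_neg at h
  have hpres : ∀ u, treeHt (f u) = treeHt u := fun u =>
    le_antisymm (h u) (ht_le_cond hX hf u)
  refine hna ⟨hf.1, fun s t => ⟨hf.2 s t, fun hlt => ?_⟩⟩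
  have hts : treeHt t < treeHt t + 1 := by
    rw [Ordinal.add_one_eq_succ]; exact Order.lt_succ _
  exact cond_reflect hX hf (γ := treeHt t + 1) (fun u _ => hpres u) hts hlt

/-- An abstract initial segment of height `γ`: a downward closed chain whose elements
realize exactly the heights `< γ`. -/
def IsSeg (P : Set X) (γ : Ordinal) : Prop :=
  (∀ p ∈ P, ∀ u, u < p → u ∈ P) ∧
  (∀ p ∈ P, ∀ q ∈ P, p = q ∨ p < q ∨ q < p) ∧
  (∀ p ∈ P, treeHt p < γ) ∧
  (∀ β, β < γ → ∃ p ∈ P, treeHt p = β)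

theorem isSeg_Iio (hX : IsTree X) (x : X) : IsSeg (Set.Iio x) (treeHt x) := by
  refine ⟨fun p hp u hu => lt_trans hu hp,
    fun p hp q hq => (lt_comparable hX hp hq).elim (fun h => Or.inr (Or.inl h))
      (fun h => h.elim Or.inl (fun h => Or.inr (Or.inr h))),
    fun p hp => treeHt_lt_of_lt hX hp, fun β hβ => ?_⟩
  obtain ⟨u, hu, h⟩ := exists_pred hX hβ
  exact ⟨u, hu, h⟩

theorem mem_of_seg (hX : IsTree X) {P : Set X} {γ : Ordinal} (hP : IsSeg P γ) {z : X}
    (hPz : ∀ p ∈ P, p < z) {u : X} (hu : u < z) (hht : treeHt u < γ) : u ∈ P := by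
  obtain ⟨p, hp, hpht⟩ := hP.2.2.2 _ hht
  have := eq_of_ht_eq hX hu (hPz p hp) (hpht ▸ rfl)
  exact this ▸ hp

theorem le_ht_of_seg (hX : IsTree X) {P : Set X} {γ : Ordinal} (hP : IsSeg P γ) {z : X}
    (hPz : ∀ p ∈ P, p < z) : γ ≤ treeHt z :=
  le_treeHt_of hX fun β hβ => by
    obtain ⟨p, hp, hpht⟩ := hP.2.2.2 _ hβ
    exact ⟨p, hPz p hp, hpht⟩

theorem seg_eq_of_subset (hX : IsTree X) {P Q : Set X} {γ : Ordinal}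
    (hP : IsSeg P γ) (hQ : IsSeg Q γ) (hsub : P ⊆ Q) : P = Q := by
  refine Set.Subset.antisymm hsub fun q hq => ?_
  obtain ⟨p, hp, hpht⟩ := hP.2.2.2 _ (hQ.2.2.1 _ hq)
  rcases hQ.2.1 _ (hsub hp) _ hq with h | h | h
  · exact h ▸ hp
  · exact absurd hpht (ne_of_lt (treeHt_lt_of_lt hX h))
  · exact absurd hpht (ne_of_gt (treeHt_lt_of_lt hX h))

theorem isSeg_image (hX : IsTree X) {f : X → X} (hf : IsCond f) {γ : Ordinal}
    (hpres : ∀ u, treeHt u < γ → treeHt (f u) = treeHt u)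
    {P : Set X} (hP : IsSeg P γ) : IsSeg (f '' P) γ := by
  refine ⟨?_, ?_, ?_, ?_⟩
  · rintro _ ⟨p, hp, rfl⟩ u hu
    have hup : treeHt u < γ := lt_trans (treeHt_lt_of_lt hX hu)
      (lt_of_le_of_lt (le_of_eq (hpres p (hP.2.2.1 _ hp))) (hP.2.2.1 _ hp))
    obtain ⟨v, hv, hvht⟩ := cond_surj_low hX hf hpres hup
    have : v < p := cond_reflect hX hf hpres (hP.2.2.1 _ hp) (by rw [hv]; exact hu)
    exact ⟨v, hP.1 _ hp _ this, hv⟩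
  · rintro _ ⟨p, hp, rfl⟩ _ ⟨q, hq, rfl⟩
    rcases hP.2.1 _ hp _ hq with h | h | h
    · exact Or.inl (congrArg f h)
    · exact Or.inr (Or.inl (hf.2 _ _ h))
    · exact Or.inr (Or.inr (hf.2 _ _ h))
  · rintro _ ⟨p, hp, rfl⟩
    rw [hpres p (hP.2.2.1 _ hp)]
    exact hP.2.2.1 _ hp
  · intro β hβ
    obtain ⟨p, hp, hpht⟩ := hP.2.2.2 _ hβ
    exact ⟨f p, ⟨p, hp, rfl⟩, by rw [hpres p (hP.2.2.1 _ hp), hpht]⟩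

theorem isSeg_preimage (hX : IsTree X) {f : X → X} (hf : IsCond f) {γ : Ordinal}
    (hpres : ∀ u, treeHt u < γ → treeHt (f u) = treeHt u)
    {Q Q' : Set X} (hQ : IsSeg Q γ) (him : f '' Q' = Q) : IsSeg Q' γ := by
  have hQ'ht : ∀ q ∈ Q', treeHt q < γ := by
    intro q hq
    have h1 : treeHt (f q) < γ := hQ.2.2.1 _ (him ▸ Set.mem_image_of_mem f hq)
    exact lt_of_le_of_lt (ht_le_cond hX hf q) h1
  refine ⟨?_, ?_, hQ'ht, ?_⟩
  · intro p hp u hu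
    have hfp : f p ∈ Q := him ▸ Set.mem_image_of_mem f hp
    have h1 : f u ∈ Q := hQ.1 _ hfp _ (hf.2 _ _ hu)
    rw [← him] at h1
    obtain ⟨v, hv, hveq⟩ := h1
    exact (hf.1.1 hveq) ▸ hv
  · intro p hp q hq
    have hfp : f p ∈ Q := him ▸ Set.mem_image_of_mem f hp
    have hfq : f q ∈ Q := him ▸ Set.mem_image_of_mem f hq
    rcases hQ.2.1 _ hfp _ hfq with h | h | h
    · exact Or.inl (hf.1.1 h)
    · exact Or.inr (Or.inl (cond_reflect hX hf hpres (hQ'ht q hq) h))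
    · exact Or.inr (Or.inr (cond_reflect hX hf hpres (hQ'ht p hp) h))
  · intro β hβ
    obtain ⟨q, hq, hqht⟩ := hQ.2.2.2 _ hβ
    rw [← him] at hq
    obtain ⟨v, hv, rfl⟩ := hq
    exact ⟨v, hv, by rw [← hpres v (hQ'ht v hv), hqht]⟩

/-- The element of height `γ` below `t`, when `P ⊆ (·,t)` is a segment of height `γ`,
has `(·,w) = P`. -/
theorem node_pred (hX : IsTree X) {P : Set X} {γ : Ordinal} (hP : IsSeg P γ) {t w : X}
    (hPt : ∀ p ∈ P, p < t) (hw : w < t) (hwht : treeHt w = γ) : Set.Iio w = P := by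
  apply Set.eq_of_subset_of_subset
  · intro u hu
    exact mem_of_seg hX hP hPt (lt_trans hu hw) (hwht ▸ treeHt_lt_of_lt hX hu)
  · intro p hp
    rcases lt_comparable hX (hPt p hp) hw with h | h | h
    · exact h
    · exact absurd (h ▸ hP.2.2.1 _ hp) (hwht ▸ lt_irrefl γ)
    · exact absurd (hwht ▸ treeHt_lt_of_lt hX h) (not_lt_of_gt (hP.2.2.1 _ hp))

/-- If `γ < treeHt t` and `P ⊆ (·,t)` is a segment of height `γ`, there is `w < t`
with `(·,w) = P`. -/
theorem exists_node_pred (hX : IsTree X) {P : Set X} {γ : Ordinal} (hP : IsSeg P γ) {t : X}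
    (hPt : ∀ p ∈ P, p < t) (hht : γ < treeHt t) : ∃ w, w < t ∧ Set.Iio w = P := by
  obtain ⟨w, hw, hwht⟩ := exists_pred hX hht
  exact ⟨w, hw, node_pred hX hP hPt hw hwht⟩

/-- Subtypes of trees are trees. -/
theorem isTree_subtype (hX : IsTree X) (S : Set X) : IsTree ↥S := by
  intro t
  haveI := hX (t : X)
  refine RelEmbedding.isWellOrder
    (⟨⟨fun s => ⟨s.1.1, s.2⟩, fun s₁ s₂ h => ?_⟩, Iff.rfl⟩ :
      (fun (a b : {s : ↥S // s < t}) => (a : ↥S) < (b : ↥S)) ↪r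
      (fun (a b : {s : X // s < (t : X)}) => (a : X) < (b : X)))
  simp only [Subtype.mk.injEq] at h
  exact Subtype.ext (Subtype.ext h)

/-- If all `T`-predecessors of `t ∈ S` lie in `S`, then the height of `t` in `↥S` agrees
with its height in `T`. -/
theorem treeHt_subtype_eq (hX : IsTree X) {S : Set X} (t : ↥S)
    (h : ∀ u : X, u < (t : X) → u ∈ S) : treeHt t = treeHt (t : X) := by
  haveI := hX (t : X)
  haveI := (isTree_subtype hX S) t
  rw [treeHt_eq (isTree_subtype hX S) t, treeHt_eq hX (t : X)]
  exact RelIso.ordinal_type_eq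
    ⟨⟨fun s => ⟨s.1.1, s.2⟩, fun u => ⟨⟨u.1, h u.1 u.2⟩, u.2⟩,
      fun s => rfl, fun u => rfl⟩, Iff.rfl⟩

theorem chainHt_Iio (hX : IsTree X) (t : X) : chainHt (Set.Iio t) = treeHt t := by
  haveI := hX t
  haveI : IsWellOrder ↥(Set.Iio t) (fun x y : ↥(Set.Iio t) => (x : X) < (y : X)) := hX t
  rw [treeHt_eq hX t]
  unfold chainHt
  rw [dif_pos this]
  exact RelIso.ordinal_type_eq ⟨⟨fun s => ⟨s.1, s.2⟩, fun s => ⟨s.1, s.2⟩,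
    fun s => rfl, fun s => rfl⟩, Iff.rfl⟩

end TreeLemmas

section Easy

variable {X : Type v} [PartialOrder X]

theorem treeHt_auto (hX : IsTree X) {f : X → X} (hf : IsAuto f) (t : X) :
    treeHt (f t) = treeHt t := by
  haveI := hX t; haveI := hX (f t)
  rw [treeHt_eq hX t, treeHt_eq hX (f t)]
  have hbij : ∀ u : {s : X // s < f t}, ∃ v : {s : X // s < t}, f v.1 = u.1 := by
    intro u
    obtain ⟨v, hv⟩ := hf.1.2 u.1
    exact ⟨⟨v, (hf.2 v t).2 (hv ▸ u.2)⟩, hv⟩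
  refine (RelIso.ordinal_type_eq ?_).symm
  refine ⟨Equiv.ofBijective (fun s => (⟨f s.1, (hf.2 s.1 t).1 s.2⟩ : {s : X // s < f t})) ⟨?_, ?_⟩,
    @fun a b => ?_⟩
  · intro s₁ s₂ h
    simp only [Subtype.mk.injEq] at h
    exact Subtype.ext (hf.1.1 h)
  · intro u
    obtain ⟨v, hv⟩ := hbij u
    exact ⟨v, Subtype.ext hv⟩
  · exact (hf.2 a.1 b.1).symm

theorem not_reversible_of_critical {T : Type u} [PartialOrder T] (hT : IsTree T)
    (h : ∃ N : Set T, IsCriticalNode N) : ¬ Reversible T := by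
  intro hrev
  obtain ⟨N, ⟨t₀, hN⟩, g, hg, a, haN, hlt⟩ := h
  let S : Set T := upClo N
  have hNiio : ∀ n ∈ N, Set.Iio n = Set.Iio t₀ := fun n hn => by
    rw [hN] at hn; exact hn
  have hkey : ∀ s t : T, s ∉ S → t ∈ S → s < t → ∀ m ∈ N, s < m := by
    intro s t hsS htS hst m hm
    obtain ⟨n, hn, hnt⟩ := htS
    have hsn : s < n := by
      rcases eq_or_lt_of_le hnt with rfl | hnt'
      · exact hst
      · rcases lt_comparable hT hst hnt' with h' | h' | h'
        · exact h'
        · exact absurd ⟨n, hn, le_of_eq h'.symm⟩ hsS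
        · exact absurd ⟨n, hn, le_of_lt h'⟩ hsS
    have h1 : s ∈ Set.Iio t₀ := hNiio n hn ▸ hsn
    show s ∈ Set.Iio m
    rw [hNiio m hm]
    exact h1
  classical
  let F : T → T := fun x => if hx : x ∈ S then ((g ⟨x, hx⟩ : ↥S) : T) else x
  have hFS : ∀ x (hx : x ∈ S), F x = ((g ⟨x, hx⟩ : ↥S) : T) := fun x hx => dif_pos hx
  have hFnS : ∀ x, x ∉ S → F x = x := fun x hx => dif_neg hx
  have hFmemS : ∀ x (hx : x ∈ S), F x ∈ S := fun x hx => by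
    rw [hFS x hx]; exact (g ⟨x, hx⟩).2
  have hcond : IsCond F := by
    refine ⟨⟨?_, ?_⟩, ?_⟩
    · intro x y hxy
      by_cases hx : x ∈ S <;> by_cases hy : y ∈ S
      · rw [hFS x hx, hFS y hy] at hxy
        have := hg.1.1 (Subtype.ext hxy)
        simpa using congrArg Subtype.val this
      · rw [hFS x hx, hFnS y hy] at hxy
        exact absurd (hxy ▸ (g ⟨x, hx⟩).2) hy
      · rw [hFnS x hx, hFS y hy] at hxy
        exact absurd (hxy ▸ (g ⟨y, hy⟩).2) hx
      · rwa [hFnS x hx, hFnS y hy] at hxy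
    · intro y
      by_cases hy : y ∈ S
      · obtain ⟨u, hu⟩ := hg.1.2 ⟨y, hy⟩
        refine ⟨u.1, ?_⟩
        rw [hFS u.1 u.2]
        exact congrArg Subtype.val ((by rw [Subtype.eta]; exact hu) :
          g ⟨u.1, u.2⟩ = ⟨y, hy⟩)
      · exact ⟨y, hFnS y hy⟩
    · intro s t hst
      by_cases hs : s ∈ S <;> by_cases ht : t ∈ S
      · rw [hFS s hs, hFS t ht]
        exact hg.2 _ _ (Subtype.mk_lt_mk.2 hst)
      · exact absurd (⟨hs.choose, hs.choose_spec.1, le_trans hs.choose_spec.2 (le_of_lt hst)⟩ :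
          t ∈ S) ht
      · rw [hFnS s hs, hFS t ht]
        obtain ⟨m, hm, hmle⟩ := (g ⟨t, ht⟩).2
        exact lt_of_lt_of_le (hkey s t hs ht hst m hm) hmle
      · rw [hFnS s hs, hFnS t ht]; exact hst
  have hauto : IsAuto F := hrev F hcond
  have hgauto : IsAuto g := by
    refine ⟨hg.1, fun u v => ⟨fun h' => hg.2 _ _ h', fun h' => ?_⟩⟩
    have h1 : F u.1 < F v.1 := by
      rw [hFS u.1 u.2, hFS v.1 v.2]
      simp only [Subtype.eta]
      exact Subtype.coe_lt_coe.2 h'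
    have := (hauto.2 u.1 v.1).2 h1
    exact Subtype.coe_lt_coe.1 this
  have := treeHt_auto (isTree_subtype hT S) hgauto a
  exact absurd hlt (this ▸ lt_irrefl _)

theorem not_reversible_of_arch {T : Type u} [PartialOrder T] (hT : IsTree T)
    (h : HasArchetypicalSubtree T) : ¬ Reversible T := by
  intro hrev
  obtain ⟨A, P, a, b, α, F, -, -, -, -, -, -, -, -, -, h9, h10, -, -, -, h14, -, -, f, hf, hext⟩ := h
  have hauto := hrev f hf
  have h1 : f (a 0 : T) < f (b 0 : T) := by
    rw [hext (a 0), hext (b 0), (h14 0).1, (h14 0).2]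
    exact Subtype.coe_lt_coe.2 (h10 1 one_pos)
  have h2 : (a 0 : T) < (b 0 : T) := (hauto.2 _ _).2 h1
  exact (h9 0 le_rfl).1 (Subtype.coe_lt_coe.1 h2)

end Easy

section Forward

variable {X : Type v} [PartialOrder X]

theorem iscond_comp {f g : X → X} (hf : IsCond f) (hg : IsCond g) : IsCond (f ∘ g) :=
  ⟨hf.1.comp hg.1, fun s t h => hf.2 _ _ (hg.2 _ _ h)⟩

theorem iscond_iterate {f : X → X} (hf : IsCond f) (k : ℕ) : IsCond f^[k] := by
  induction k with
  | zero => exact ⟨Function.bijective_id, fun s t h => h⟩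
  | succ n ih =>
    rw [Function.iterate_succ]
    exact iscond_comp ih hf

theorem hpres_iterate (hX : IsTree X) {f : X → X} (hf : IsCond f) {γ : Ordinal}
    (hpres : ∀ u, treeHt u < γ → treeHt (f u) = treeHt u) (k : ℕ) :
    ∀ u, treeHt u < γ → treeHt (f^[k] u) = treeHt u := by
  induction k with
  | zero => intro u _; rfl
  | succ n ih =>
    intro u hu
    rw [Function.iterate_succ_apply', hpres _ (by rw [ih u hu]; exact hu), ih u hu]

theorem ht_le_iterate (hX : IsTree X) {f : X → X} (hf : IsCond f) (k : ℕ) (t : X) :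
    treeHt t ≤ treeHt (f^[k] t) := by
  induction k with
  | zero => exact le_rfl
  | succ n ih =>
    rw [Function.iterate_succ_apply']
    exact le_trans ih (ht_le_cond hX hf _)

/-- Case 1 of the forward direction: if some power of the condensation fixes the branch
below the raised element, we obtain a critical node. -/
theorem critical_of_fixed {T : Type u} [PartialOrder T] (hT : IsTree T) {φ : T → T} {x : T}
    {γ : Ordinal.{u}}
    (hφ : IsCond φ) (hpres : ∀ u, treeHt u < γ → treeHt (φ u) = treeHt u)
    (hx : treeHt x = γ) (hraise : γ < treeHt (φ x))
    (hfix : φ '' Set.Iio x = Set.Iio x) : ∃ N : Set T, IsCriticalNode N := by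
  have hseg : IsSeg (Set.Iio x) γ := hx ▸ isSeg_Iio hT x
  let N : Set T := {s : T | Set.Iio s = Set.Iio x}
  -- membership in the upward closure
  have claim1a : ∀ t ∈ upClo N, ∀ p ∈ Set.Iio x, p < t := by
    rintro t ⟨n, hn, hnt⟩ p hp
    have : p < n := by
      have : p ∈ Set.Iio n := by rw [(hn : Set.Iio n = Set.Iio x)]; exact hp
      exact this
    exact lt_of_lt_of_le this hnt
  have claim1ht : ∀ t ∈ upClo N, γ ≤ treeHt t := fun t htS =>
    le_ht_of_seg hT hseg (claim1a t htS)
  have claim1b : ∀ t : T, (∀ p ∈ Set.Iio x, p < t) → t ∈ upClo N := by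
    intro t hPt
    have hge : γ ≤ treeHt t := le_ht_of_seg hT hseg hPt
    rcases eq_or_lt_of_le hge with heq | hlt
    · have : Set.Iio t = Set.Iio x := by
        apply Set.eq_of_subset_of_subset
        · intro u hu
          exact mem_of_seg hT hseg hPt hu (heq ▸ treeHt_lt_of_lt hT hu)
        · intro p hp
          exact hPt p hp
      exact ⟨t, this, le_rfl⟩
    · obtain ⟨w, hw, hwIio⟩ := exists_node_pred hT hseg hPt hlt
      exact ⟨w, hwIio, le_of_lt hw⟩
  have claim2 : ∀ t ∈ upClo N, φ t ∈ upClo N := by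
    intro t htS
    apply claim1b
    intro p hp
    rw [← hfix] at hp
    obtain ⟨q, hq, rfl⟩ := hp
    exact hφ.2 _ _ (claim1a t htS q hq)
  have claim3 : ∀ t ∈ upClo N, ∃ u ∈ upClo N, φ u = t := by
    intro t htS
    obtain ⟨u, hu⟩ := hφ.1.2 t
    have hγu : γ ≤ treeHt u := by
      by_contra hc
      push_neg at hc
      have := hpres u hc
      rw [hu] at this
      exact absurd (lt_of_le_of_lt (this ▸ claim1ht t htS) hc) (lt_irrefl γ)
    have hQseg : IsSeg {v | v < u ∧ treeHt v < γ} γ := by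
      refine ⟨fun p hp v hv => ⟨lt_trans hv hp.1, lt_trans (treeHt_lt_of_lt hT hv) hp.2⟩,
        fun p hp q hq => lt_comparable hT hp.1 hq.1 |>.elim (fun h => Or.inr (Or.inl h))
          (fun h => h.elim Or.inl fun h => Or.inr (Or.inr h)),
        fun p hp => hp.2, fun β hβ => ?_⟩
      obtain ⟨v, hv, hvht⟩ := exists_pred hT (lt_of_lt_of_le hβ hγu)
      exact ⟨v, ⟨hv, hvht ▸ hβ⟩, hvht⟩
    have himsub : φ '' {v | v < u ∧ treeHt v < γ} ⊆ Set.Iio x := by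
      rintro _ ⟨v, hv, rfl⟩
      have h1 : φ v < t := hu ▸ hφ.2 _ _ hv.1
      exact mem_of_seg hT hseg (claim1a t htS) h1 (by rw [hpres v hv.2]; exact hv.2)
    have him : φ '' {v | v < u ∧ treeHt v < γ} = Set.Iio x :=
      seg_eq_of_subset hT (isSeg_image hT hφ hpres hQseg) hseg himsub
    have hQP : {v | v < u ∧ treeHt v < γ} = Set.Iio x := by
      apply Set.eq_of_subset_of_subset
      · intro v hv
        have h1 : φ v ∈ φ '' Set.Iio x := by
          rw [hfix, ← him]; exact Set.mem_image_of_mem φ hv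
        obtain ⟨p, hp, hpeq⟩ := h1
        exact hφ.1.1 hpeq ▸ hp
      · intro p hp
        have h1 : φ p ∈ φ '' {v | v < u ∧ treeHt v < γ} := by
          rw [him, ← hfix]; exact Set.mem_image_of_mem φ hp
        obtain ⟨q, hq, hqeq⟩ := h1
        exact hφ.1.1 hqeq ▸ hq
    refine ⟨u, claim1b u fun p hp => ?_, hu⟩
    rw [← hQP] at hp
    exact hp.1
  -- the condensation of the cone
  let g : ↥(upClo N) → ↥(upClo N) := fun s => ⟨φ s.1, claim2 s.1 s.2⟩
  have hxN : x ∈ N := rfl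
  have hxS : x ∈ upClo N := ⟨x, hxN, le_rfl⟩
  have hgcond : IsCond g := by
    refine ⟨⟨?_, ?_⟩, ?_⟩
    · intro s₁ s₂ h
      have : φ s₁.1 = φ s₂.1 := congrArg Subtype.val h
      exact Subtype.ext (hφ.1.1 this)
    · intro t
      obtain ⟨u, hu, hut⟩ := claim3 t.1 t.2
      exact ⟨⟨u, hu⟩, Subtype.ext hut⟩
    · intro s t h
      exact Subtype.mk_lt_mk.2 (hφ.2 _ _ (Subtype.coe_lt_coe.2 h))
  refine ⟨N, ⟨x, rfl⟩, g, hgcond, ⟨x, hxS⟩, hxN, ?_⟩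
  have hht0 : treeHt (⟨x, hxS⟩ : ↥(upClo N)) = 0 := by
    apply treeHt_eq_zero
    intro s hs
    have h1 : s.1 < x := Subtype.coe_lt_coe.2 hs
    have h2 : s.1 ∈ Set.Iio x := h1
    exact lt_irrefl s.1 (claim1a s.1 s.2 s.1 h2)
  rw [hht0]
  -- the image has positive height in the cone
  have h1 : γ < treeHt (φ x) := hraise
  obtain ⟨w, hw, hwIio⟩ := exists_node_pred hT hseg (claim1a _ (claim2 x hxS)) h1
  have hwS : w ∈ upClo N := ⟨w, hwIio, le_rfl⟩
  exact treeHt_pos (isTree_subtype hT (upClo N)) (Subtype.mk_lt_mk.2 hw :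
    (⟨w, hwS⟩ : ↥(upClo N)) < g ⟨x, hxS⟩)

end Forward

/-- Case 2 of the forward direction: if no power of the condensation fixes the branch
below the raised element, we obtain an archetypical subtree. -/
theorem arch_of_shift {T : Type u} [PartialOrder T] (hT : IsTree T) {f : T → T} {x : T}
    {γ : Ordinal.{u}}
    (hf : IsCond f) (hpres : ∀ u, treeHt u < γ → treeHt (f u) = treeHt u)
    (hx : treeHt x = γ) (hraise : γ < treeHt (f x))
    (hnofix : ∀ k : ℕ, 1 ≤ k → f^[k] '' Set.Iio x ≠ Set.Iio x) :
    HasArchetypicalSubtree T := by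
  classical
  set e : Equiv.Perm T := Equiv.ofBijective f hf.1 with he
  have hef : ∀ t : T, e t = f t := fun t => rfl
  have hcomp : ∀ (j k : ℤ) (t : T), (e ^ j) ((e ^ k) t) = (e ^ (j + k)) t := by
    intro j k t
    rw [zpow_add]
    exact (Equiv.Perm.mul_apply _ _ _).symm
  have hek : ∀ (n : ℤ) (t : T), (e ^ (n + 1)) t = f ((e ^ n) t) := by
    intro n t
    rw [add_comm, ← hcomp 1 n t, zpow_one, hef]
  have hnat : ∀ (k : ℕ) (t : T), (e ^ (k : ℤ)) t = f^[k] t := by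
    intro k
    induction k with
    | zero => intro t; simp
    | succ m ih =>
      intro t
      have : ((m : ℤ) + 1) = ((m + 1 : ℕ) : ℤ) := by push_cast; ring
      rw [← this, hek, ih, Function.iterate_succ_apply']
  set Pn : ℤ → Set T := fun n => (e ^ n) '' Set.Iio x with hPn
  have himP : ∀ n : ℤ, f '' Pn n = Pn (n + 1) := by
    intro n
    rw [hPn]
    simp only [← Set.image_comp]
    apply Set.image_congr
    intro t _
    exact (hek n t).symm
  have hP0 : Pn 0 = Set.Iio x := by
    rw [hPn]; simp
  have hPinj : ∀ m n : ℤ, Pn m = Pn n → m = n := by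
    have key : ∀ m n : ℤ, m < n → Pn m = Pn n → False := by
      intro m n hmn heq
      have h1 : ∀ j : ℤ, (e ^ (-m)) '' Pn j = Pn (j - m) := by
        intro j
        rw [hPn]
        simp only [← Set.image_comp]
        apply Set.image_congr
        intro t _
        show (e ^ (-m)) ((e ^ j) t) = _
        rw [hcomp]
        congr 1
        ring
      have h2 : Pn 0 = Pn (n - m) := by
        have := congrArg (fun S => (e ^ (-m)) '' S) heq
        simp only [h1] at this
        have hmm : m - m = 0 := by ring
        rwa [hmm] at this
      set k : ℕ := (n - m).toNat with hk
      have hknat : ((k : ℤ)) = n - m := Int.toNat_of_nonneg (by omega)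
      have h3 : Pn (n - m) = f^[k] '' Set.Iio x := by
        rw [hPn, ← hknat]
        apply Set.image_congr
        intro t _
        exact hnat k t
      exact hnofix k (by omega) (by rw [← h3, ← h2, hP0])
    intro m n heq
    rcases lt_trichotomy m n with h | h | h
    · exact absurd heq (fun hh => key m n h hh)
    · exact h
    · exact absurd heq.symm (fun hh => key n m h hh)
  have hseg0 : IsSeg (Set.Iio x) γ := hx ▸ isSeg_Iio hT x
  have hγpos : 0 < γ := by
    rcases eq_zero_or_pos γ with h0 | hpos
    · exfalso
      have hemp : Set.Iio x = (∅ : Set T) := by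
        apply Set.eq_empty_iff_forall_notMem.2
        intro u hu
        have := treeHt_lt_of_lt hT hu
        rw [hx, h0] at this
        exact absurd this (by simp)
      exact hnofix 1 le_rfl (by rw [hemp]; simp)
    · exact hpos
  have hsegn : ∀ n : ℤ, IsSeg (Pn n) γ := by
    intro n
    induction n using Int.induction_on with
    | zero => rw [hP0]; exact hseg0
    | succ i ih => exact himP i ▸ isSeg_image hT hf hpres ih
    | pred i ih =>
      refine isSeg_preimage hT hf hpres ih ?_
      have := himP (-(i : ℤ) - 1)
      rwa [show (-(i : ℤ) - 1 + 1) = -(i : ℤ) by ring] at this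
  obtain ⟨a1, ha1lt, ha1ht⟩ := exists_pred hT hraise
  have hPn1 : Pn 1 = f '' Set.Iio x := by
    have h := himP 0
    rw [hP0, show ((0 : ℤ) + 1) = 1 by norm_num] at h
    exact h.symm
  have hP1b : ∀ p ∈ Pn 1, p < f x := by
    intro p hp
    rw [hPn1] at hp
    obtain ⟨q, hq, rfl⟩ := hp
    exact hf.2 _ _ hq
  have hIioa1 : Set.Iio a1 = Pn 1 := node_pred hT (hsegn 1) hP1b ha1lt ha1ht
  set an : ℤ → T := fun n => (e ^ (n - 1)) a1 with han
  set bn : ℤ → T := fun n => (e ^ n) x with hbn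
  have hfa : ∀ n : ℤ, f (an n) = an (n + 1) := by
    intro n
    rw [han]
    show f ((e ^ (n - 1)) a1) = (e ^ (n + 1 - 1)) a1
    rw [show (n + 1 - 1 : ℤ) = (n - 1) + 1 by ring, hek]
  have hfb : ∀ n : ℤ, f (bn n) = bn (n + 1) := fun n => (hek n x).symm
  have han1 : an 1 = a1 := by rw [han]; show (e ^ (1 - 1 : ℤ)) a1 = a1; norm_num
  have hbn0 : bn 0 = x := by rw [hbn]; show (e ^ (0 : ℤ)) x = x; norm_num
  have hbn1 : bn 1 = f x := by
    rw [hbn]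
    show (e ^ (1 : ℤ)) x = f x
    rw [zpow_one, hef]
  have hab_ne : ∀ n : ℤ, an n ≠ bn n := by
    intro n h
    have h1 : (e ^ (n - 1)) (f x) = bn n := by
      have h2 := hcomp (n - 1) 1 x
      rw [zpow_one, hef] at h2
      rw [h2]
      show (e ^ (n - 1 + 1)) x = (e ^ n) x
      rw [show (n - 1 + 1 : ℤ) = n by ring]
    rw [← h1] at h
    have h' : (e ^ (n - 1)) a1 = (e ^ (n - 1)) (f x) := h
    exact absurd ((e ^ (n - 1)).injective h') (ne_of_lt ha1lt)
  -- a single step downwards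
  have down_step : ∀ {y z : T} {m : ℤ}, f z = y → treeHt y = γ → Set.Iio y = Pn m →
      treeHt z = γ ∧ Set.Iio z = Pn (m - 1) := by
    intro y z m hfz hyht hyIio
    have hzle : treeHt z ≤ γ := by
      have := ht_le_cond hT hf z
      rwa [hfz, hyht] at this
    have hzht : treeHt z = γ := by
      rcases eq_or_lt_of_le hzle with h | h
      · exact h
      · exfalso
        have := hpres z h
        rw [hfz, hyht] at this
        exact absurd (this ▸ h) (lt_irrefl γ)
    have hQ : IsSeg (Set.Iio z) γ := hzht ▸ isSeg_Iio hT z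
    have him2 : f '' Set.Iio z ⊆ Pn m := by
      rintro _ ⟨u, hu, rfl⟩
      rw [← hyIio]
      exact hfz ▸ hf.2 _ _ hu
    have him3 : f '' Set.Iio z = Pn m :=
      seg_eq_of_subset hT (isSeg_image hT hf hpres hQ) (hsegn m) him2
    have him4 : f '' Pn (m - 1) = Pn m := by
      have := himP (m - 1)
      rwa [show (m - 1 + 1 : ℤ) = m by ring] at this
    refine ⟨hzht, Set.eq_of_subset_of_subset ?_ ?_⟩
    · intro u hu
      have h1 : f u ∈ Pn m := him3 ▸ Set.mem_image_of_mem f hu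
      rw [← him4] at h1
      obtain ⟨v, hv, hveq⟩ := h1
      exact hf.1.1 hveq ▸ hv
    · intro p hp
      have h1 : f p ∈ Pn m := him4 ▸ Set.mem_image_of_mem f hp
      rw [← him3] at h1
      obtain ⟨v, hv, hveq⟩ := h1
      exact hf.1.1 hveq ▸ hv
  -- the main induction
  have hC : ∀ n : ℤ,
      (n ≤ 0 → treeHt (an n) = γ ∧ treeHt (bn n) = γ ∧
        Set.Iio (an n) = Pn n ∧ Set.Iio (bn n) = Pn n) ∧
      (1 ≤ n → an n < bn n ∧ ∀ p ∈ Pn n, p < an n) := by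
    have base_a0 : treeHt (an 0) = γ ∧ Set.Iio (an 0) = Pn (0 : ℤ) := by
      have h1 : f (an 0) = a1 := by rw [hfa 0, show ((0 : ℤ) + 1) = 1 by ring, han1]
      have := down_step h1 ha1ht hIioa1
      rwa [show ((1 : ℤ) - 1) = 0 by ring] at this
    intro n
    induction n using Int.induction_on with
    | zero =>
      refine ⟨fun _ => ⟨base_a0.1, ?_, base_a0.2, ?_⟩, fun h => absurd h (by norm_num)⟩
      · rw [hbn0]; exact hx
      · rw [hbn0, hP0]
    | succ i ih =>
      refine ⟨fun h => absurd h (by omega), fun _ => ?_⟩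
      rcases Nat.eq_zero_or_pos i with rfl | hipos
      · constructor
        · rw [show ((0 : ℕ) : ℤ) + 1 = 1 by norm_num, han1, hbn1]
          exact ha1lt
        · intro p hp
          rw [show ((0 : ℕ) : ℤ) + 1 = 1 by norm_num] at hp ⊢
          rw [han1, ← hIioa1] at *
          exact hp
      · have hi1 : (1 : ℤ) ≤ (i : ℤ) := by exact_mod_cast hipos
        obtain ⟨hablt, hPsub⟩ := ih.2 hi1
        constructor
        · rw [← hfa, ← hfb]
          exact hf.2 _ _ hablt
        · intro p hp
          have h1 : Pn ((i : ℤ) + 1) = f '' Pn i := (himP i).symm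
          rw [h1] at hp
          obtain ⟨q, hq, rfl⟩ := hp
          rw [← hfa]
          exact hf.2 _ _ (hPsub q hq)
    | pred i ih =>
      refine ⟨fun _ => ?_, fun h => absurd h (by omega)⟩
      have hlow := ih.1 (by omega)
      have hfa' : f (an (-(i : ℤ) - 1)) = an (-(i : ℤ)) := by
        rw [hfa (-(i : ℤ) - 1), show (-(i : ℤ) - 1 + 1) = -(i : ℤ) by ring]
      have hfb' : f (bn (-(i : ℤ) - 1)) = bn (-(i : ℤ)) := by
        rw [hfb (-(i : ℤ) - 1), show (-(i : ℤ) - 1 + 1) = -(i : ℤ) by ring]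
      have hstepa := down_step hfa' hlow.1 hlow.2.2.1
      have hstepb := down_step hfb' hlow.2.1 hlow.2.2.2
      exact ⟨hstepa.1, hstepb.1, hstepa.2, hstepb.2⟩
  have hPa : ∀ n : ℤ, ∀ p ∈ Pn n, p < an n := by
    intro n p hp
    rcases le_or_gt n 0 with h | h
    · rw [← ((hC n).1 h).2.2.1] at hp; exact hp
    · exact ((hC n).2 (by omega)).2 p hp
  have hPb : ∀ n : ℤ, ∀ p ∈ Pn n, p < bn n := by
    intro n p hp
    rcases le_or_gt n 0 with h | h
    · rw [← ((hC n).1 h).2.2.2] at hp; exact hp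
    · exact lt_trans (hPa n p hp) ((hC n).2 (by omega)).1
  have hγa : ∀ n : ℤ, γ ≤ treeHt (an n) := fun n => le_ht_of_seg hT (hsegn n) (hPa n)
  have hlowa : ∀ (n : ℤ) (u : T), u < an n → treeHt u < γ → u ∈ Pn n := fun n u h1 h2 =>
    mem_of_seg hT (hsegn n) (hPa n) h1 h2
  have hlowb : ∀ (n : ℤ) (u : T), u < bn n → treeHt u < γ → u ∈ Pn n := fun n u h1 h2 =>
    mem_of_seg hT (hsegn n) (hPb n) h1 h2
  have hsub_eq : ∀ {m n : ℤ} {z : T}, (∀ p ∈ Pn m, p < z) →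
      (∀ u : T, u < z → treeHt u < γ → u ∈ Pn n) → m = n := by
    intro m n z h1 h2
    apply hPinj
    exact seg_eq_of_subset hT (hsegn m) (hsegn n)
      (fun p hp => h2 p (h1 p hp) ((hsegn m).2.2.1 p hp))
  have haa : ∀ m n : ℤ, an m < an n → False := by
    intro m n h
    have : m = n := hsub_eq (fun p hp => lt_trans (hPa m p hp) h) (hlowa n)
    exact lt_irrefl _ (this ▸ h)
  have hba : ∀ m n : ℤ, bn m < an n → False := by
    intro m n h
    have hmn : m = n := hsub_eq (fun p hp => lt_trans (hPb m p hp) h) (hlowa n)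
    subst hmn
    rcases le_or_gt m 0 with h0 | h0
    · have h1 := treeHt_lt_of_lt hT h
      rw [((hC m).1 h0).1, ((hC m).1 h0).2.1] at h1
      exact lt_irrefl γ h1
    · exact lt_asymm ((hC m).2 (by omega)).1 h
  have hbb : ∀ m n : ℤ, bn m < bn n → False := by
    intro m n h
    have : m = n := hsub_eq (fun p hp => lt_trans (hPb m p hp) h) (hlowb n)
    exact lt_irrefl _ (this ▸ h)
  have hab : ∀ m n : ℤ, an m < bn n → m = n ∧ 1 ≤ n := by
    intro m n h
    have hmn : m = n := hsub_eq (fun p hp => lt_trans (hPa m p hp) h) (hlowb n)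
    subst hmn
    rcases le_or_gt m 0 with h0 | h0
    · exfalso
      have h1 := treeHt_lt_of_lt hT h
      rw [((hC m).1 h0).1, ((hC m).1 h0).2.1] at h1
      exact lt_irrefl γ h1
    · exact ⟨rfl, by omega⟩
  -- the subtree A
  set A : Set T := {t | (∃ n : ℤ, t ∈ Pn n) ∨ (∃ n : ℤ, t = an n) ∨ (∃ n : ℤ, t = bn n)}
    with hA
  have hPA : ∀ n : ℤ, Pn n ⊆ A := fun n p hp => Or.inl ⟨n, hp⟩
  have haA : ∀ n : ℤ, an n ∈ A := fun n => Or.inr (Or.inl ⟨n, rfl⟩)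
  have hbAm : ∀ n : ℤ, bn n ∈ A := fun n => Or.inr (Or.inr ⟨n, rfl⟩)
  have hIA_a : ∀ (n : ℤ) (t : T), t ∈ A → t < an n → t ∈ Pn n := by
    intro n t htA hlt
    rcases htA with ⟨m, hm⟩ | ⟨m, rfl⟩ | ⟨m, rfl⟩
    · exact hlowa n t hlt ((hsegn m).2.2.1 t hm)
    · exact absurd hlt (fun h => haa m n h)
    · exact absurd hlt (fun h => hba m n h)
  have hIA_b_low : ∀ (n : ℤ), n ≤ 0 → ∀ t : T, t ∈ A → t < bn n → t ∈ Pn n := by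
    intro n hn t htA hlt
    rcases htA with ⟨m, hm⟩ | ⟨m, rfl⟩ | ⟨m, rfl⟩
    · exact hlowb n t hlt ((hsegn m).2.2.1 t hm)
    · exact absurd ((hab m n hlt).2) (by omega)
    · exact absurd hlt (fun h => hbb m n h)
  have hIA_b_high : ∀ (n : ℤ), 1 ≤ n → ∀ t : T, t ∈ A → t < bn n →
      t ∈ Pn n ∨ t = an n := by
    intro n hn t htA hlt
    rcases htA with ⟨m, hm⟩ | ⟨m, rfl⟩ | ⟨m, rfl⟩
    · exact Or.inl (hlowb n t hlt ((hsegn m).2.2.1 t hm))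
    · exact Or.inr (by rw [(hab m n hlt).1])
    · exact absurd hlt (fun h => hbb m n h)
  have hTA : IsTree ↥A := isTree_subtype hT A
  set PA : ℤ → Set ↥A := fun n => {t : ↥A | (t : T) ∈ Pn n} with hPAdef
  set aA : ℤ → ↥A := fun n => ⟨an n, haA n⟩ with haAdef
  set bA : ℤ → ↥A := fun n => ⟨bn n, hbAm n⟩ with hbAdef
  have htA_P : ∀ (n : ℤ) (p : ↥A), (p : T) ∈ Pn n → treeHt p = treeHt (p : T) := by
    intro n p hp
    exact treeHt_subtype_eq hT p (fun u hu => hPA n ((hsegn n).1 _ hp _ hu))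
  have hlt1 : γ < γ + 1 := by
    rw [Ordinal.add_one_eq_succ]; exact Order.lt_succ γ
  have htA_a : ∀ n : ℤ, treeHt (aA n) = γ := by
    intro n
    apply le_antisymm
    · apply treeHt_le_of hTA
      intro s hs
      have h1 : (s : T) ∈ Pn n := hIA_a n s.1 s.2 (Subtype.coe_lt_coe.2 hs)
      rw [htA_P n s h1]
      exact (hsegn n).2.2.1 _ h1
    · apply le_treeHt_of hTA
      intro β hβ
      obtain ⟨p, hp, hpht⟩ := (hsegn n).2.2.2 β hβ
      refine ⟨⟨p, hPA n hp⟩, Subtype.coe_lt_coe.1 (hPa n p hp), ?_⟩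
      rw [htA_P n ⟨p, hPA n hp⟩ hp]
      exact hpht
  have htA_b_low : ∀ n : ℤ, n ≤ 0 → treeHt (bA n) = γ := by
    intro n hn
    apply le_antisymm
    · apply treeHt_le_of hTA
      intro s hs
      have h1 : (s : T) ∈ Pn n := hIA_b_low n hn s.1 s.2 (Subtype.coe_lt_coe.2 hs)
      rw [htA_P n s h1]
      exact (hsegn n).2.2.1 _ h1
    · apply le_treeHt_of hTA
      intro β hβ
      obtain ⟨p, hp, hpht⟩ := (hsegn n).2.2.2 β hβ
      refine ⟨⟨p, hPA n hp⟩, Subtype.coe_lt_coe.1 (hPb n p hp), ?_⟩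
      rw [htA_P n ⟨p, hPA n hp⟩ hp]
      exact hpht
  have htA_b_high : ∀ n : ℤ, 1 ≤ n → treeHt (bA n) = γ + 1 := by
    intro n hn
    apply le_antisymm
    · apply treeHt_le_of hTA
      intro s hs
      rcases hIA_b_high n hn s.1 s.2 (Subtype.coe_lt_coe.2 hs) with h1 | h1
      · rw [htA_P n s h1]
        exact lt_trans ((hsegn n).2.2.1 _ h1) hlt1
      · have : s = aA n := Subtype.ext h1
        rw [this, htA_a n]
        exact hlt1
    · rw [Ordinal.add_one_eq_succ, Order.succ_le_iff]
      have h1 : aA n < bA n := Subtype.coe_lt_coe.1 ((hC n).2 hn).1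
      exact htA_a n ▸ treeHt_lt_of_lt hTA h1
  have htA_le : ∀ t : ↥A, treeHt t ≤ γ + 1 := by
    intro t
    rcases t.2 with ⟨m, hm⟩ | ⟨m, hm⟩ | ⟨m, hm⟩
    · rw [htA_P m t hm]
      exact le_of_lt (lt_trans ((hsegn m).2.2.1 _ hm) hlt1)
    · rw [show t = aA m from Subtype.ext hm, htA_a m]
      exact le_of_lt hlt1
    · rcases le_or_gt m 0 with h0 | h0
      · rw [show t = bA m from Subtype.ext hm, htA_b_low m h0]
        exact le_of_lt hlt1
      · rw [show t = bA m from Subtype.ext hm, htA_b_high m (by omega)]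
  have hlow_iff : ∀ t : ↥A, treeHt t < γ ↔ ∃ n : ℤ, (t : T) ∈ Pn n := by
    intro t
    constructor
    · intro hlt
      rcases t.2 with ⟨m, hm⟩ | ⟨m, hm⟩ | ⟨m, hm⟩
      · exact ⟨m, hm⟩
      · rw [show t = aA m from Subtype.ext hm, htA_a m] at hlt
        exact absurd hlt (lt_irrefl γ)
      · rcases le_or_gt m 0 with h0 | h0
        · rw [show t = bA m from Subtype.ext hm, htA_b_low m h0] at hlt
          exact absurd hlt (lt_irrefl γ)
        · rw [show t = bA m from Subtype.ext hm, htA_b_high m (by omega)] at hlt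
          exact absurd (lt_trans hlt hlt1) (lt_irrefl _)
    · rintro ⟨n, hn⟩
      rw [htA_P n t hn]
      exact (hsegn n).2.2.1 _ hn
  have hFA : ∀ t : ↥A, f (t : T) ∈ A := by
    intro t
    rcases t.2 with ⟨m, hm⟩ | ⟨m, hm⟩ | ⟨m, hm⟩
    · exact Or.inl ⟨m + 1, himP m ▸ Set.mem_image_of_mem f hm⟩
    · exact Or.inr (Or.inl ⟨m + 1, by rw [hm, hfa]⟩)
    · exact Or.inr (Or.inr ⟨m + 1, by rw [hm, hfb]⟩)
  set F : ↥A → ↥A := fun t => ⟨f t.1, hFA t⟩ with hF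
  -- the tree height of A
  have h2eq : γ + 2 = (γ + 1) + 1 := by
    rw [add_assoc]
    norm_num
  have hlev_top : level ↥A (γ + 2) = ∅ := by
    apply Set.eq_empty_iff_forall_notMem.2
    intro t ht
    have h1 : treeHt t ≤ γ + 1 := htA_le t
    rw [show treeHt t = γ + 2 from ht] at h1
    rw [h2eq] at h1
    exact absurd h1 (not_le_of_gt (by rw [Ordinal.add_one_eq_succ]; exact Order.lt_succ _))
  have htH : treeHeight ↥A = γ + 2 := by
    apply le_antisymm
    · exact csInf_le (OrderBot.bddBelow _) hlev_top
    · apply le_csInf ⟨γ + 2, hlev_top⟩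
      intro β hβ
      by_contra hc
      push_neg at hc
      have hβle : β ≤ γ + 1 := by
        rw [h2eq, Ordinal.add_one_eq_succ, Order.lt_succ_iff] at hc
        exact hc
      have : ∃ t : ↥A, treeHt t = β := by
        rcases eq_or_lt_of_le hβle with rfl | hβlt
        · exact ⟨bA 1, htA_b_high 1 le_rfl⟩
        · have hβγ : β ≤ γ := by
            rw [Ordinal.add_one_eq_succ, Order.lt_succ_iff] at hβlt
            exact hβlt
          rcases eq_or_lt_of_le hβγ with rfl | hβγlt
          · exact ⟨aA 0, htA_a 0⟩
          · obtain ⟨p, hp, hpht⟩ := (hsegn 0).2.2.2 β hβγlt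
            exact ⟨⟨p, hPA 0 hp⟩, by rw [htA_P 0 ⟨p, hPA 0 hp⟩ hp]; exact hpht⟩
      obtain ⟨t, ht⟩ := this
      exact absurd (Set.eq_empty_iff_forall_notMem.1 hβ t) (fun h => h ht)
  -- assemble
  refine ⟨A, PA, aA, bA, γ, F, ?_, hγpos, htH, ?_, ?_, ?_, ?_, ?_, ?_, ?_, ?_, ?_, ?_, ?_, ?_,
    ?_, ?_, ⟨f, hf, fun t => rfl⟩⟩
  · -- cover
    intro t
    rcases t.2 with ⟨n, hn⟩ | ⟨n, hn⟩ | ⟨n, hn⟩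
    · exact Or.inl ⟨n, hn⟩
    · exact Or.inr (Or.inl ⟨n, Subtype.ext hn⟩)
    · exact Or.inr (Or.inr ⟨n, Subtype.ext hn⟩)
  · -- distinctness
    intro m n hmn heq
    apply hmn
    apply hPinj
    apply Set.eq_of_subset_of_subset
    · intro p hp
      have : (⟨p, hPA m hp⟩ : ↥A) ∈ PA m := hp
      rw [heq] at this
      exact this
    · intro p hp
      have : (⟨p, hPA n hp⟩ : ↥A) ∈ PA n := hp
      rw [← heq] at this
      exact this
  · -- heights below α
    intro n t ht
    exact (hlow_iff t).2 ⟨n, ht⟩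
  · -- chains and maximality
    intro n
    constructor
    · intro p hp q hq hne
      rcases (hsegn n).2.1 p.1 hp q.1 hq with h | h | h
      · exact absurd (Subtype.ext h) hne
      · exact Or.inl (le_of_lt (Subtype.coe_lt_coe.1 h))
      · exact Or.inr (le_of_lt (Subtype.coe_lt_coe.1 h))
    · intro C hC hClow hPC
      apply Set.eq_of_subset_of_subset _ hPC
      intro c hcC
      have hclow : treeHt c < γ := hClow hcC
      obtain ⟨m, hm⟩ := (hlow_iff c).1 hclow
      have hcht : treeHt (c : T) < γ := (htA_P m c hm) ▸ hclow
      obtain ⟨p, hp, hpht⟩ := (hsegn n).2.2.2 _ hcht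
      have hpC : (⟨p, hPA n hp⟩ : ↥A) ∈ C := hPC hp
      by_cases hceq : c = ⟨p, hPA n hp⟩
      · rw [hceq]; exact hp
      · exfalso
        rcases hC hcC hpC hceq with h | h
        · have h1 : (c : T) < p := lt_of_le_of_ne (Subtype.coe_le_coe.2 h)
            (fun hh => hceq (Subtype.ext hh))
          exact absurd (hpht ▸ treeHt_lt_of_lt hT h1) (lt_irrefl _)
        · have h1 : p < (c : T) := lt_of_le_of_ne (Subtype.coe_le_coe.2 h)
            (fun hh => hceq (Subtype.ext hh.symm))
          exact absurd (hpht ▸ treeHt_lt_of_lt hT h1) (fun hh => lt_asymm hh hh)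
  · -- chain heights
    intro n
    have hPIio : PA n = Set.Iio (aA n) := by
      apply Set.eq_of_subset_of_subset
      · intro t ht
        exact Subtype.coe_lt_coe.1 (hPa n t.1 ht)
      · intro t ht
        exact hIA_a n t.1 t.2 (Subtype.coe_lt_coe.2 ht)
    rw [hPIio, chainHt_Iio hTA, htA_a n]
  · -- aA ≠ bA
    intro n h
    exact hab_ne n (congrArg Subtype.val h)
  · -- P n below a n and b n
    intro n t ht
    exact ⟨Subtype.coe_lt_coe.1 (hPa n t.1 ht), Subtype.coe_lt_coe.1 (hPb n t.1 ht)⟩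
  · -- incomparability for n ≤ 0
    intro n hn
    constructor
    · intro h
      exact absurd (hab n n (Subtype.coe_lt_coe.2 h)).2 (by omega)
    · intro h
      exact hba n n (Subtype.coe_lt_coe.2 h)
  · -- comparability for n > 0
    intro n hn
    exact Subtype.coe_lt_coe.1 ((hC n).2 (by omega)).1
  · -- bijectivity on the low part
    refine ⟨?_, ?_, ?_⟩
    · intro t ht
      obtain ⟨m, hm⟩ := (hlow_iff t).1 ht
      exact (hlow_iff (F t)).2 ⟨m + 1, himP m ▸ Set.mem_image_of_mem f hm⟩
    · intro p _ q _ h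
      exact Subtype.ext (hf.1.1 (congrArg Subtype.val h))
    · intro t ht
      obtain ⟨m, hm⟩ := (hlow_iff t).1 ht
      have h1 : (t : T) ∈ f '' Pn (m - 1) := by
        have := himP (m - 1)
        rw [show (m - 1 + 1 : ℤ) = m by ring] at this
        rw [this]
        exact hm
      obtain ⟨s, hs, hfs⟩ := h1
      refine ⟨⟨s, hPA _ hs⟩, (hlow_iff _).2 ⟨m - 1, hs⟩, Subtype.ext hfs⟩
  · -- reflection on the low part
    intro s t hs ht
    constructor
    · intro h
      exact Subtype.coe_lt_coe.1 (hf.2 _ _ (Subtype.coe_lt_coe.2 h))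
    · intro h
      obtain ⟨m, hm⟩ := (hlow_iff t).1 ht
      have h1 : f (s : T) < f (t : T) := Subtype.coe_lt_coe.2 h
      exact Subtype.coe_lt_coe.1
        (cond_reflect hT hf hpres ((hsegn m).2.2.1 _ hm) h1)
  · -- image of P n
    intro n
    apply Set.eq_of_subset_of_subset
    · rintro _ ⟨p, hp, rfl⟩
      show f (p : T) ∈ Pn (n + 1)
      exact himP n ▸ Set.mem_image_of_mem f hp
    · intro q hq
      have h1 : (q : T) ∈ f '' Pn n := by rw [himP n]; exact hq
      obtain ⟨s, hs, hfs⟩ := h1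
      exact ⟨⟨s, hPA n hs⟩, hs, Subtype.ext hfs⟩
  · -- F on the a's and b's
    intro n
    exact ⟨Subtype.ext (hfa n), Subtype.ext (hfb n)⟩
  · -- Iio a 0
    have h1 : Set.Iio (an 0) = Pn (0 : ℤ) := ((hC 0).1 le_rfl).2.2.1
    show Set.Iio (an 0) = _
    rw [h1]
    apply Set.eq_of_subset_of_subset
    · intro p hp
      exact ⟨⟨p, hPA 0 hp⟩, hp, rfl⟩
    · rintro _ ⟨t, ht, rfl⟩
      exact ht
  · -- Iio b 0
    have h1 : Set.Iio (bn 0) = Pn (0 : ℤ) := ((hC 0).1 le_rfl).2.2.2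
    show Set.Iio (bn 0) = _
    rw [h1]
    apply Set.eq_of_subset_of_subset
    · intro p hp
      exact ⟨⟨p, hPA 0 hp⟩, hp, rfl⟩
    · rintro _ ⟨t, ht, rfl⟩
      exact ht

/-- A tree is non-reversible iff it contains a critical node or an
archetypical subtree. -/
theorem stmt7 {T : Type u} [PartialOrder T] (hT : IsTree T) :
    ¬ Reversible T ↔
      (∃ N : Set T, IsCriticalNode N) ∨ HasArchetypicalSubtree T := by
  constructor
  · intro hnr
    rw [Reversible, not_forall] at hnr
    obtain ⟨f, hnf⟩ := hnr
    rw [_root_.not_imp] at hnf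
    obtain ⟨hf, hna⟩ := hnf
    obtain ⟨x₀, hx₀⟩ := exists_raise hT hf hna
    -- the minimal raised height
    set Γ : Set Ordinal.{u} := {β | ∃ x : T, treeHt x = β ∧ β < treeHt (f x)} with hΓ
    have hne : Γ.Nonempty := ⟨treeHt x₀, x₀, rfl, hx₀⟩
    set γ : Ordinal.{u} := sInf Γ with hγ
    obtain ⟨x, hx, hraise⟩ : ∃ x : T, treeHt x = γ ∧ γ < treeHt (f x) := csInf_mem hne
    have hpres : ∀ u : T, treeHt u < γ → treeHt (f u) = treeHt u := by
      intro u hu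
      refine le_antisymm ?_ (ht_le_cond hT hf u)
      by_contra hc
      push_neg at hc
      have : treeHt u ∈ Γ := ⟨u, rfl, hc⟩
      exact absurd (csInf_le (OrderBot.bddBelow _) this) (not_le_of_gt hu)
    by_cases hfix : ∃ k : ℕ, 1 ≤ k ∧ f^[k] '' Set.Iio x = Set.Iio x
    · left
      obtain ⟨k, hk1, hkfix⟩ := hfix
      refine critical_of_fixed hT (iscond_iterate hf k)
        (hpres_iterate hT hf hpres k) hx ?_ hkfix
      calc γ < treeHt (f x) := hraise
        _ ≤ treeHt (f^[k] x) := by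
          obtain ⟨k', rfl⟩ := Nat.exists_eq_add_of_le hk1
          rw [add_comm, Function.iterate_add_apply, Function.iterate_one]
          exact ht_le_iterate hT hf k' (f x)
    · right
      push_neg at hfix
      exact arch_of_shift hT hf hpres hx hraise hfix
  · rintro (h | h)
    · exact not_reversible_of_critical hT h
    · exact not_reversible_of_arch hT h
end

section
/- Let T be a non-reversible tree, let f be a condensation of T that is not an automorphism, and let α := min{ht(t) : t ∈ T and ht(t) < ht(f(t))}. If α = 0, then L_0 is a critical node of T. If α > 0, then: (a) there exist a_0, b_0 ∈ L_α such that f(a_0) ∈ L_α and f(a_0) < f(b_0); (b) f maps T|α bijectively onto itself and the restriction f↾(T|α) is an automorphism of the tree T|α; and (d) a_0 and b_0 belong to the same node of T. -/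
/- A tree is a partial order in which the set of strict predecessors of every
element is well-ordered. Basic vocabulary: condensations, automorphisms,
reversibility, heights, levels, nodes, upward closures, branches. -/

universe u v

/-- `f` maps `T|β` bijectively onto itself and the restriction `f↾(T|β)` is an
automorphism of the tree `T|β`. -/
def RestrAuto {T : Type u} [PartialOrder T] (f : T → T) (β : Ordinal.{u}) : Prop :=
  Set.BijOn f {t : T | treeHt t < β} {t : T | treeHt t < β} ∧
  ∀ s t : T, treeHt s < β → treeHt t < β → (s < t ↔ f s < f t)

section helpers
variable {T : Type u} [PartialOrder T]

lemma treeHt_def (hT : IsTree T) (t : T) :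
    treeHt t = @Ordinal.type {s : T // s < t} (fun a b => (a : T) < (b : T)) (hT t) :=
  dif_pos (hT t)

lemma ht_typein (hT : IsTree T) {s t : T} (h : s < t) :
    treeHt s = @Ordinal.typein {u : T // u < t} (fun a b => (a : T) < (b : T)) (hT t) ⟨s, h⟩ := by
  haveI := hT t
  haveI := hT s
  rw [treeHt_def hT s, ← Ordinal.type_subrel]
  refine RelIso.ordinal_type_eq ?_
  exact { toFun := fun u => ⟨⟨u.1, u.2.trans h⟩, u.2⟩
          invFun := fun u => ⟨u.1.1, u.2⟩
          left_inv := fun u => rfl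
          right_inv := fun u => rfl
          map_rel_iff' := Iff.rfl }

lemma ht_lt_ht (hT : IsTree T) {s t : T} (h : s < t) : treeHt s < treeHt t := by
  haveI := hT t
  rw [ht_typein hT h, treeHt_def hT t]
  exact Ordinal.typein_lt_type _ _

lemma ht_unique (hT : IsTree T) {u v t : T} (hu : u < t) (hv : v < t)
    (he : treeHt u = treeHt v) : u = v := by
  haveI := hT t
  rw [ht_typein hT hu, ht_typein hT hv] at he
  have := Ordinal.typein_injective _ he
  exact congrArg Subtype.val this

lemma exists_ht (hT : IsTree T) {t : T} {γ : Ordinal.{u}} (hγ : γ < treeHt t) :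
    ∃ s, s < t ∧ treeHt s = γ := by
  haveI := hT t
  rw [treeHt_def hT t] at hγ
  obtain ⟨⟨s, hs⟩, h⟩ := Ordinal.typein_surj _ hγ
  exact ⟨s, hs, (ht_typein hT hs).trans h⟩

lemma ht_le_of_cond (hT : IsTree T) {f : T → T}
    (hinj : Function.Injective f) (hmono : ∀ s t : T, s < t → f s < f t) (t : T) :
    treeHt t ≤ treeHt (f t) := by
  haveI := hT t; haveI := hT (f t)
  rw [treeHt_def hT t, treeHt_def hT (f t), Ordinal.type_le_iff']
  refine ⟨⟨⟨fun u => ⟨f u.1, hmono _ _ u.2⟩, ?_⟩, ?_⟩⟩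
  · intro u v huv
    exact Subtype.ext (hinj (congrArg Subtype.val huv))
  · rintro ⟨u, hu⟩ ⟨v, hv⟩
    show f u < f v ↔ u < v
    constructor
    · intro hlt
      rcases @trichotomous _ _ (hT t).toTrichotomous ⟨u, hu⟩ ⟨v, hv⟩ with h | h | h
      · exact h
      · obtain rfl : u = v := congrArg Subtype.val h
        exact absurd hlt (lt_irrefl _)
      · exact absurd (hmono _ _ h) (asymm hlt)
    · exact fun hlt => hmono _ _ hlt

lemma ht_zero_iff (hT : IsTree T) (t : T) : treeHt t = 0 ↔ ∀ u, ¬ u < t := by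
  haveI := hT t
  rw [treeHt_def hT t, Ordinal.type_eq_zero_iff_isEmpty]
  exact ⟨fun h u hu => h.false ⟨u, hu⟩, fun h => ⟨fun u => h u.1 u.2⟩⟩

lemma reflect (hT : IsTree T) {f : T → T} (hmono : ∀ s t : T, s < t → f s < f t)
    (hinj : Function.Injective f) {s t : T}
    (hs : treeHt (f s) = treeHt s) (ht' : treeHt (f t) = treeHt t)
    (hall : ∀ u, u < t → treeHt (f u) = treeHt u) (hlt : f s < f t) : s < t := by
  have h1 : treeHt s < treeHt t := by rw [← hs, ← ht']; exact ht_lt_ht hT hlt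
  obtain ⟨u, hut, hu⟩ := exists_ht hT h1
  have h2 : f u = f s :=
    ht_unique hT (hmono _ _ hut) hlt (by rw [hall u hut, hu, hs])
  have := hinj h2
  rwa [← this]

lemma ht_subtype (hT : IsTree T) {S : Set T} (hS : S = Set.univ) (a : ↥S) :
    treeHt a = treeHt (a : T) := by
  haveI := hT (a : T)
  have e : (fun (x y : {x : ↥S // x < a}) => (x.1 : ↥S) < (y.1 : ↥S)) ≃r
      (fun (u v : {u : T // u < (a : T)}) => (u.1 : T) < (v.1 : T)) :=
    { toFun := fun x => ⟨(x.1 : T), Subtype.coe_lt_coe.mpr x.2⟩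
      invFun := fun u => ⟨⟨u.1, Set.eq_univ_iff_forall.mp hS u.1⟩, Subtype.coe_lt_coe.mp (by exact u.2)⟩
      left_inv := fun x => by ext; rfl
      right_inv := fun u => rfl
      map_rel_iff' := @fun x y => Subtype.coe_lt_coe }
  haveI hwo : IsWellOrder {x : ↥S // x < a} (fun x y => (x.1 : ↥S) < (y.1 : ↥S)) :=
    RelEmbedding.isWellOrder e.toRelEmbedding
  have h1 : treeHt a = @Ordinal.type _ _ hwo := dif_pos hwo
  rw [h1, treeHt_def hT (a : T)]
  exact e.ordinal_type_eq

end helpers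

/-- Let `T` be a non-reversible tree, `f` a condensation of `T` that
is not an automorphism, and `α := min{ht(t) : t ∈ T ∧ ht(t) < ht(f(t))}`. If
`α = 0` then `L_0` is a critical node of `T`; and if `α > 0` then:
(a) there are `a₀, b₀ ∈ L_α` with `f(a₀) ∈ L_α` and `f(a₀) < f(b₀)`;
(b) `f` maps `T|α` bijectively onto itself and `f↾(T|α)` is an automorphism of `T|α`;
(d) `a₀` and `b₀` belong to the same node of `T` (i.e. `(·,a₀) = (·,b₀)`). -/
theorem stmt10 {T : Type u} [PartialOrder T] (hT : IsTree T) (hnr : ¬ Reversible T)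
    (f : T → T) (hf : IsCond f) (hfna : ¬ IsAuto f)
    (α : Ordinal.{u}) (hα : α = sInf (treeHt '' {t : T | treeHt t < treeHt (f t)})) :
    (α = 0 → IsCriticalNode (level T 0)) ∧
    (0 < α →
      (∃ a₀ b₀ : T, a₀ ∈ level T α ∧ b₀ ∈ level T α ∧ f a₀ ∈ level T α ∧
        f a₀ < f b₀ ∧ Set.Iio a₀ = Set.Iio b₀) ∧
      RestrAuto f α) := by
  obtain ⟨hbij, hmono⟩ := hf
  have hinj := hbij.1
  have hle : ∀ t, treeHt t ≤ treeHt (f t) := ht_le_of_cond hT hinj hmono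
  have hAne : ({t : T | treeHt t < treeHt (f t)}).Nonempty := by
    by_contra hA0
    apply hfna
    rw [Set.not_nonempty_iff_eq_empty] at hA0
    have hpres : ∀ t, treeHt (f t) = treeHt t := by
      intro t
      rcases (hle t).lt_or_eq with h | h
      · exact absurd h (Set.eq_empty_iff_forall_notMem.mp hA0 t)
      · exact h.symm
    exact ⟨hbij, fun s t => ⟨hmono s t, fun hlt =>
      reflect hT hmono hinj (hpres s) (hpres t) (fun u _ => hpres u) hlt⟩⟩
  have hmem : α ∈ treeHt '' {t : T | treeHt t < treeHt (f t)} := by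
    rw [hα]; exact csInf_mem (hAne.image _)
  obtain ⟨b₀, hb₀A, hb₀ht⟩ := hmem
  have hmin : ∀ t : T, treeHt t < α → treeHt (f t) = treeHt t := by
    intro t h
    rcases (hle t).lt_or_eq with hlt | he
    · have : α ≤ treeHt t := by
        rw [hα]; exact csInf_le (OrderBot.bddBelow _) ⟨t, hlt, rfl⟩
      exact absurd this (not_le.mpr h)
    · exact he.symm
  constructor
  · intro h0
    have hb0 : treeHt b₀ = 0 := hb₀ht.trans h0
    have hfb0 : treeHt b₀ < treeHt (f b₀) := hb₀A
    have hIiob : Set.Iio b₀ = ∅ :=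
      Set.eq_empty_iff_forall_notMem.mpr fun u hu => (ht_zero_iff hT b₀).mp hb0 u hu
    have hlevel : level T 0 = {s : T | Set.Iio s = Set.Iio b₀} := by
      ext s
      simp only [level, Set.mem_setOf_eq, hIiob]
      rw [ht_zero_iff hT s, Set.eq_empty_iff_forall_notMem]
      simp [Set.mem_Iio]
    have hU : upClo (level T 0) = Set.univ := by
      rw [Set.eq_univ_iff_forall]
      intro t
      by_cases h : treeHt t = 0
      · exact ⟨t, h, le_refl t⟩
      · obtain ⟨s, hst, hs⟩ := exists_ht hT (pos_iff_ne_zero.mpr h)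
        exact ⟨s, hs, le_of_lt hst⟩
    set N := level T 0 with hN
    have hUm : ∀ x : T, x ∈ upClo N := Set.eq_univ_iff_forall.mp hU
    set g : ↥(upClo N) → ↥(upClo N) := fun x => ⟨f x.1, hUm (f x.1)⟩ with hg
    have ginj : Function.Injective g := fun x y h =>
      Subtype.ext (hinj (congrArg Subtype.val h))
    have gsurj : Function.Surjective g := by
      intro y
      obtain ⟨x, hx⟩ := hbij.2 y.1
      exact ⟨⟨x, hUm x⟩, Subtype.ext hx⟩
    have gmono : ∀ x y : ↥(upClo N), x < y → g x < g y := by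
      intro x y h
      exact Subtype.mk_lt_mk.mpr (hmono _ _ (Subtype.coe_lt_coe.mpr h))
    set a : ↥(upClo N) := ⟨b₀, hUm b₀⟩ with ha
    have hht : treeHt a < treeHt (g a) := by
      rw [ht_subtype hT hU a, ht_subtype hT hU (g a)]
      exact hfb0
    exact ⟨⟨b₀, hlevel⟩, g, ⟨⟨ginj, gsurj⟩, gmono⟩, a, hb0, hht⟩
  · intro hpos
    have hbht : treeHt b₀ = α := hb₀ht
    have hfb : α < treeHt (f b₀) := by rw [← hbht]; exact hb₀A
    obtain ⟨c, hcb, hc⟩ := exists_ht hT hfb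
    obtain ⟨a₀, ha₀⟩ := hbij.2 c
    have hfa : treeHt (f a₀) = α := by rw [ha₀, hc]
    have haht : treeHt a₀ = α := by
      have h1 : treeHt a₀ ≤ α := by rw [← hfa]; exact hle a₀
      rcases h1.lt_or_eq with h | h
      · have h2 := hmin a₀ h
        rw [hfa] at h2
        exact absurd h2.symm h.ne
      · exact h
    have hab : f a₀ < f b₀ := by rw [ha₀]; exact hcb
    have key : Set.Iio a₀ = Set.Iio b₀ := by
      ext u
      simp only [Set.mem_Iio]
      constructor
      · intro hu
        have hu' : treeHt u < α := by rw [← haht]; exact ht_lt_ht hT hu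
        have hub : treeHt u < treeHt b₀ := by rw [hbht]; exact hu'
        obtain ⟨w, hwb, hw⟩ := exists_ht hT hub
        have hw' : treeHt w < α := by rw [hw]; exact hu'
        have heq : f w = f u :=
          ht_unique hT (hmono _ _ hwb) (lt_trans (hmono _ _ hu) hab)
            (by rw [hmin w hw', hw, hmin u hu'])
        rw [← hinj heq]
        exact hwb
      · intro hu
        have hu' : treeHt u < α := by rw [← hbht]; exact ht_lt_ht hT hu
        have hua : treeHt u < treeHt a₀ := by rw [haht]; exact hu'
        obtain ⟨v, hva, hv⟩ := exists_ht hT hua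
        have hv' : treeHt v < α := by rw [hv]; exact hu'
        have heq : f v = f u :=
          ht_unique hT (lt_trans (hmono _ _ hva) hab) (hmono _ _ hu)
            (by rw [hmin v hv', hv, hmin u hu'])
        rw [← hinj heq]
        exact hva
    have hres : RestrAuto f α := by
      refine ⟨⟨fun t ht' => ?_, fun x _ y _ h => hinj h, fun s hs => ?_⟩,
        fun s t hs ht' => ⟨hmono s t, fun h =>
          reflect hT hmono hinj (hmin s hs) (hmin t ht')
            (fun u hu => hmin u (lt_trans (ht_lt_ht hT hu) ht')) h⟩⟩
      · show treeHt (f t) < α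
        rw [hmin t ht']
        exact ht'
      · obtain ⟨t, htf⟩ := hbij.2 s
        refine ⟨t, ?_, htf⟩
        show treeHt t < α
        have := hle t
        rw [htf] at this
        exact lt_of_le_of_lt this hs
    exact ⟨⟨a₀, b₀, haht, hbht, hfa, hab, key⟩, hres⟩
end

section
/- Let T be a tree, N a node of T, s_i (i ∈ ω) pairwise distinct elements of N, and T′ ⊆ [s_0,·) := {t ∈ T : t ≥ s_0}. Suppose there exist a condensation g_0 from [s_0,·) onto [s_0,·)∖T′, a condensation g_1 from [s_1,·) onto T′, and condensations g_i from [s_i,·) onto [s_{i-1},·) for every i ≥ 2 (all these sets carrying the induced order). Then T is not reversible; moreover, N is a critical node of T. -/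
/- A tree is a partial order in which the set of strict predecessors of every
element is well-ordered. Basic vocabulary: condensations, automorphisms,
reversibility, heights, levels, nodes, upward closures, branches. -/

universe u v

/-- A condensation from the suborder `A` onto the suborder `B`: a bijection
`A → B` mapping `<` to `<`. -/
def CondOn {T : Type u} [PartialOrder T] (A B : Set T) : Prop :=
  ∃ h : ↥A → ↥B, Function.Bijective h ∧
    ∀ x y : ↥A, (x : T) < (y : T) → (h x : T) < (h y : T)

/-! Let `U = ⋃ i, [s_i,·)`. Since the `s_i` lie in one node, the cones `[s_i,·)` are pairwise
disjoint, and so are their prescribed images `[s_0,·) ∖ T'`, `T'`, `[s_1,·)`, `[s_2,·)`, …,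
whose union is again `U`. Gluing the given condensations and extending by the identity off `U`
gives a condensation `g` of `T`: an element below some point of `U` but outside `U` lies below
every `s_i`, hence below all of `U`. Either `s_0 ∈ T'`, and then `g(s_0) > s_0`, or `g(s_1) ∈ T'`
lies strictly above `s_0`. In both cases `g` raises the height of a point of `N`, so `g` is not an
automorphism, and neither is its restriction to `N↑`. -/

open Set Function

section Glue

variable {α β ι : Type*}

theorem exists_eqOn_iUnion_of_pairwise_disjoint {A : ι → Set α} (hA : Pairwise (Disjoint on A))
    (f : ι → α → α) : ∃ g : α → α, (∀ i, EqOn g (f i) (A i)) ∧ EqOn g id (⋃ i, A i)ᶜ := by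
  classical
  refine ⟨fun x => if h : ∃ i, x ∈ A i then f h.choose x else x, fun i x hx => ?_, fun x hx => ?_⟩
  · have h : ∃ i, x ∈ A i := ⟨i, hx⟩
    have hi : h.choose = i := hA.eq (not_disjoint_iff.2 ⟨x, h.choose_spec, hx⟩)
    simp only [dif_pos h, hi]
  · have h : ¬ ∃ i, x ∈ A i := by simpa using hx
    simp only [dif_neg h, id]

theorem bijOn_iUnion_of_pairwise_disjoint {A : ι → Set α} {B : ι → Set β} {g : α → β}
    (hB : Pairwise (Disjoint on B)) (hg : ∀ i, BijOn g (A i) (B i)) :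
    BijOn g (⋃ i, A i) (⋃ i, B i) := by
  refine bijOn_iUnion hg fun x hx y hy hxy => ?_
  obtain ⟨i, hx⟩ := mem_iUnion.1 hx
  obtain ⟨j, hy⟩ := mem_iUnion.1 hy
  obtain rfl : i = j :=
    hB.eq (not_disjoint_iff.2 ⟨g x, (hg i).mapsTo hx, hxy ▸ (hg j).mapsTo hy⟩)
  exact (hg i).injOn hx hy hxy

theorem mapsTo_and_mapsTo_compl_of_eqOn_compl {f : α → α} {U S : Set α} (hU : MapsTo f U U)
    (hid : EqOn f id Uᶜ) (hUS : U ⊆ S) : MapsTo f S S ∧ MapsTo f Sᶜ Sᶜ := by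
  refine ⟨fun x hx => ?_, fun x hx => ?_⟩
  · by_cases hxU : x ∈ U
    · exact hUS (hU hxU)
    · rwa [hid hxU]
  · rwa [hid fun hxU => hx (hUS hxU)]

variable [PartialOrder α]

theorem strictMonoOn_iUnion_of_isUpperSet [Preorder β] {A : ι → Set α} {g : α → β}
    (hA : ∀ i, IsUpperSet (A i)) (hg : ∀ i, StrictMonoOn g (A i)) :
    StrictMonoOn g (⋃ i, A i) := by
  intro x hx y _ hxy
  obtain ⟨i, hx⟩ := mem_iUnion.1 hx
  exact hg i hx (hA i hxy.le hx) hxy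

theorem CondOn.exists_bijOn_strictMonoOn {A B : Set α} (h : CondOn A B) :
    ∃ f : α → α, BijOn f A B ∧ StrictMonoOn f A := by
  obtain ⟨h, hbij, hmono⟩ := h
  let f : α → α := Subtype.val.extend (fun x : A => (h x : α)) id
  have hf : ∀ x : A, f x = h x := Subtype.val_injective.extend_apply _ _
  refine ⟨f, ⟨fun x hx => ?_, fun x hx y hy hxy => ?_, fun y hy => ?_⟩, fun x hx y hy hxy => ?_⟩
  · exact hf ⟨x, hx⟩ ▸ (h ⟨x, hx⟩).2
  · rw [hf ⟨x, hx⟩, hf ⟨y, hy⟩] at hxy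
    exact congrArg Subtype.val (hbij.1 (Subtype.ext hxy))
  · obtain ⟨x, hx⟩ := hbij.2 ⟨y, hy⟩
    exact ⟨x, x.2, (hf x).trans (congrArg Subtype.val hx)⟩
  · simpa only [hf ⟨x, hx⟩, hf ⟨y, hy⟩] using hmono ⟨x, hx⟩ ⟨y, hy⟩ hxy

theorem isCond_of_bijOn_of_eqOn_compl {f : α → α} {U : Set α} (hbij : BijOn f U U)
    (hmono : StrictMonoOn f U) (hid : EqOn f id Uᶜ) (hU : IsUpperSet U)
    (hbelow : ∀ x ∉ U, ∀ y ∈ U, x < y → ∀ z ∈ U, x < z) : IsCond f := by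
  refine ⟨?_, fun x y hxy => ?_⟩
  · have hcompl : BijOn f Uᶜ Uᶜ := (bijOn_id _).congr hid.symm
    rw [← bijOn_univ, ← union_compl_self U]
    refine hbij.union hcompl ((injOn_union disjoint_compl_right).2
      ⟨hbij.injOn, hcompl.injOn, fun x hx y hy hxy => ?_⟩)
    exact hcompl.mapsTo hy (hxy ▸ hbij.mapsTo hx)
  by_cases hy : y ∈ U
  · by_cases hx : x ∈ U
    · exact hmono hx hy hxy
    · rw [hid hx]
      exact hbelow x hx y hy hxy _ (hbij.mapsTo hy)
  · have hx : x ∉ U := fun hx => hy (hU hxy.le hx)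
    rwa [hid hx, hid hy]

theorem IsCond.restrict {f : α → α} (hf : IsCond f) {S : Set α} (hS : MapsTo f S S)
    (hSc : MapsTo f Sᶜ Sᶜ) : IsCond (hS.restrict f S S) := by
  have hbij : BijOn f S S := ⟨hS, hf.1.1.injOn, by simpa using hSc.surjOn_compl hf.1.2⟩
  exact ⟨hbij.bijective, fun x y hxy => hf.2 x y hxy⟩

end Glue

section Tree

variable {T : Type u} [PartialOrder T]

theorem IsTree.le_total_of_le (hT : IsTree T) {a b c : T} (ha : a ≤ c) (hb : b ≤ c) :
    a ≤ b ∨ b ≤ a := by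
  rcases ha.eq_or_lt with rfl | ha
  · exact Or.inr hb
  rcases hb.eq_or_lt with rfl | hb
  · exact Or.inl ha.le
  have := hT c
  rcases trichotomous_of (fun x y : {s : T // s < c} => (x : T) < y) ⟨a, ha⟩ ⟨b, hb⟩
    with h | h | h
  · exact Or.inl h.le
  · exact Or.inl (congrArg Subtype.val h).le
  · exact Or.inr h.le

theorem IsTree.lt_of_lt_of_le_of_not_le (hT : IsTree T) {x y s : T} (hxy : x < y) (hs : s ≤ y)
    (hsx : ¬ s ≤ x) : x < s :=
  ((hT.le_total_of_le hxy.le hs).resolve_right hsx).lt_of_ne (by rintro rfl; exact hsx le_rfl)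

theorem IsTree.eq_of_Iio_eq_of_le (hT : IsTree T) {a b c : T} (h : Iio a = Iio b) (ha : a ≤ c)
    (hb : b ≤ c) : a = b := by
  by_contra hne
  rcases hT.le_total_of_le ha hb with hab | hab
  · have : a ∈ Iio b := hab.lt_of_ne hne
    rw [← h] at this
    exact lt_irrefl a this
  · have : b ∈ Iio a := hab.lt_of_ne (Ne.symm hne)
    rw [h] at this
    exact lt_irrefl b this

theorem IsTree.subtype (hT : IsTree T) (S : Set T) : IsTree S := fun t =>
  have := hT t.1
  RelEmbedding.isWellOrder
    (⟨⟨fun x => ⟨x.1.1, Subtype.coe_lt_coe.mpr x.2⟩,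
      fun x y h => by injection h with h; exact Subtype.ext (Subtype.ext h)⟩,
      fun {_ _} => Subtype.coe_lt_coe⟩ :
      (fun a b : {x : S // x < t} => (a : S) < b) ↪r
        (fun a b : {x : T // x < t.1} => (a : T) < b))

theorem treeHt_eq_of_Iio_eq (hT : IsTree T) {a b : T} (h : Iio a = Iio b) :
    treeHt a = treeHt b := by
  have hiff : ∀ x : T, x < a ↔ x < b := fun x => Set.ext_iff.mp h x
  have := hT a
  have := hT b
  unfold treeHt
  rw [dif_pos (hT a), dif_pos (hT b), Ordinal.type_eq]
  exact ⟨⟨⟨fun x => ⟨x.1, (hiff x.1).1 x.2⟩, fun x => ⟨x.1, (hiff x.1).2 x.2⟩,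
    fun _ => rfl, fun _ => rfl⟩, Iff.rfl⟩⟩

theorem treeHt_lt_treeHt (hT : IsTree T) {a b : T} (hab : a < b) : treeHt a < treeHt b := by
  have := hT a
  have := hT b
  unfold treeHt
  rw [dif_pos (hT a), dif_pos (hT b)]
  let e : (fun x y : {x : T // x < a} => (x : T) < y) ↪r
      (fun x y : {x : T // x < b} => (x : T) < y) :=
    ⟨⟨fun x => ⟨x.1, x.2.trans hab⟩, fun x y h => by injection h with h; exact Subtype.ext h⟩,
      Iff.rfl⟩
  refine PrincipalSeg.ordinal_type_lt ⟨e, ⟨a, hab⟩, fun c => ⟨?_, fun hc => ⟨⟨c.1, hc⟩, rfl⟩⟩⟩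
  rintro ⟨x, rfl⟩
  exact x.2

theorem treeHt_lt_of_Iio_eq_of_lt (hT : IsTree T) {a b c : T} (h : Iio a = Iio b)
    (hbc : b < c) : treeHt a < treeHt c :=
  (treeHt_eq_of_Iio_eq hT h).trans_lt (treeHt_lt_treeHt hT hbc)

theorem IsAuto.treeHt_apply (hT : IsTree T) {f : T → T} (hf : IsAuto f) (t : T) :
    treeHt (f t) = treeHt t := by
  have := hT t
  have := hT (f t)
  unfold treeHt
  rw [dif_pos (hT t), dif_pos (hT (f t)), Ordinal.type_eq]
  have hbij : Bijective
      fun x : {x : T // x < t} => (⟨f x, (hf.2 x t).1 x.2⟩ : {y // y < f t}) := by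
    refine ⟨fun x y hxy => Subtype.ext (hf.1.1 (congrArg Subtype.val hxy)), fun y => ?_⟩
    obtain ⟨x, hx⟩ := hf.1.2 y.1
    exact ⟨⟨x, (hf.2 x t).2 (hx ▸ y.2)⟩, Subtype.ext hx⟩
  exact ⟨(RelIso.mk (Equiv.ofBijective _ hbij) fun {a b} => (hf.2 a.1 b.1).symm).symm⟩

theorem not_reversible_of_treeHt_lt (hT : IsTree T) {f : T → T} (hf : IsCond f) {a : T}
    (ha : treeHt a < treeHt (f a)) : ¬ Reversible T := fun hrev =>
  ha.ne ((hrev f hf).treeHt_apply hT a).symm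

end Tree

section Cones

variable {T : Type u} [PartialOrder T] {ι : Type*} {s : ι → T}

theorem pairwise_disjoint_Ici_of_Iio_eq (hT : IsTree T) (hs : Injective s)
    (hIio : ∀ i j, Iio (s i) = Iio (s j)) : Pairwise (Disjoint on fun i => Ici (s i)) :=
  fun i j hij => disjoint_left.2 fun _ hi hj => hij (hs (hT.eq_of_Iio_eq_of_le (hIio i j) hi hj))

theorem lt_of_lt_of_mem_iUnion_Ici (hT : IsTree T) (hIio : ∀ i j, Iio (s i) = Iio (s j)) :
    ∀ x ∉ ⋃ i, Ici (s i), ∀ y ∈ ⋃ i, Ici (s i), x < y → ∀ z ∈ ⋃ i, Ici (s i), x < z := by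
  intro x hx y hy hxy z hz
  obtain ⟨i, hy⟩ := mem_iUnion.1 hy
  obtain ⟨j, hz⟩ := mem_iUnion.1 hz
  have hxi : x ∈ Iio (s i) :=
    hT.lt_of_lt_of_le_of_not_le hxy hy fun hix => hx (mem_iUnion.2 ⟨i, hix⟩)
  rw [hIio i j] at hxi
  exact hxi.trans_le hz

end Cones

def coneImage {T : Type u} [PartialOrder T] (s : ℕ → T) (T' : Set T) : ℕ → Set T
  | 0 => Ici (s 0) \ T'
  | 1 => T'
  | i + 2 => Ici (s (i + 1))

section ConeImage

variable {T : Type u} [PartialOrder T] {s : ℕ → T} {T' : Set T}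

theorem coneImage_subset (hT' : T' ⊆ Ici (s 0)) : ∀ i, coneImage s T' i ⊆ Ici (s (i - 1))
  | 0 => sdiff_subset
  | 1 => hT'
  | _ + 2 => subset_rfl

theorem pairwise_disjoint_coneImage (hT' : T' ⊆ Ici (s 0))
    (hs : Pairwise (Disjoint on fun i => Ici (s i))) : Pairwise (Disjoint on coneImage s T') := by
  intro i j hij
  by_cases h : i - 1 = j - 1
  · obtain ⟨rfl, rfl⟩ | ⟨rfl, rfl⟩ : i = 0 ∧ j = 1 ∨ i = 1 ∧ j = 0 := by omega
    exacts [disjoint_sdiff_left, disjoint_sdiff_right]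
  · exact (hs h).mono (coneImage_subset hT' i) (coneImage_subset hT' j)

theorem iUnion_coneImage (hT' : T' ⊆ Ici (s 0)) :
    ⋃ i, coneImage s T' i = ⋃ i, Ici (s i) := by
  refine (iUnion_subset fun i => (coneImage_subset hT' i).trans
    (subset_iUnion (fun k => Ici (s k)) _)).antisymm (iUnion_subset fun i x hx => mem_iUnion.2 ?_)
  rcases i with _ | i
  · by_cases hxT' : x ∈ T'
    exacts [⟨1, hxT'⟩, ⟨0, hx, hxT'⟩]
  · exact ⟨i + 2, hx⟩

theorem condOn_coneImage (h0 : CondOn (Ici (s 0)) (Ici (s 0) \ T')) (h1 : CondOn (Ici (s 1)) T')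
    (h2 : ∀ i : ℕ, 2 ≤ i → CondOn (Ici (s i)) (Ici (s (i - 1)))) :
    ∀ i, CondOn (Ici (s i)) (coneImage s T' i)
  | 0 => h0
  | 1 => h1
  | i + 2 => h2 (i + 2) (by omega)

end ConeImage

theorem exists_isCond_lt_apply {T : Type u} [PartialOrder T] (hT : IsTree T) {s : ℕ → T}
    (hs : Injective s) (hIio : ∀ i j, Iio (s i) = Iio (s j)) {T' : Set T} (hT' : T' ⊆ Ici (s 0))
    (h0 : CondOn (Ici (s 0)) (Ici (s 0) \ T')) (h1 : CondOn (Ici (s 1)) T')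
    (h2 : ∀ i : ℕ, 2 ≤ i → CondOn (Ici (s i)) (Ici (s (i - 1)))) :
    ∃ g : T → T, IsCond g ∧ MapsTo g (⋃ i, Ici (s i)) (⋃ i, Ici (s i)) ∧
      EqOn g id (⋃ i, Ici (s i))ᶜ ∧ ∃ i, s 0 < g (s i) := by
  have hA := pairwise_disjoint_Ici_of_Iio_eq hT hs hIio
  choose f hf hfmono using fun i =>
    (condOn_coneImage h0 h1 h2 i).exists_bijOn_strictMonoOn
  obtain ⟨g, hgf, hgid⟩ := exists_eqOn_iUnion_of_pairwise_disjoint hA f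
  have hgB : ∀ i, BijOn g (Ici (s i)) (coneImage s T' i) := fun i =>
    (hf i).congr (hgf i).symm
  have hbij : BijOn g (⋃ i, Ici (s i)) (⋃ i, Ici (s i)) := by
    simpa only [iUnion_coneImage hT'] using
      bijOn_iUnion_of_pairwise_disjoint (pairwise_disjoint_coneImage hT' hA) hgB
  have hmono : StrictMonoOn g (⋃ i, Ici (s i)) := strictMonoOn_iUnion_of_isUpperSet
    (fun i => isUpperSet_Ici _) fun i => (hfmono i).congr (hgf i).symm
  refine ⟨g, isCond_of_bijOn_of_eqOn_compl hbij hmono hgid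
    (isUpperSet_iUnion fun i => isUpperSet_Ici _) (lt_of_lt_of_mem_iUnion_Ici hT hIio),
    hbij.mapsTo, hgid, ?_⟩
  by_cases hs0 : s 0 ∈ T'
  · have hg0 : g (s 0) ∈ Ici (s 0) \ T' := (hgB 0).mapsTo (mem_Ici.2 le_rfl)
    exact ⟨0, hg0.1.lt_of_ne fun he => hg0.2 (he ▸ hs0)⟩
  · have hg1 : g (s 1) ∈ T' := (hgB 1).mapsTo (mem_Ici.2 le_rfl)
    exact ⟨1, (hT' hg1).lt_of_ne fun he => hs0 (he ▸ hg1)⟩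

/-- Let `T` be a tree, `N` a node of `T`, `s_i` (`i ∈ ω`) pairwise
distinct elements of `N` and `T' ⊆ [s_0,·)`. If there are a condensation from
`[s_0,·)` onto `[s_0,·) ∖ T'`, a condensation from `[s_1,·)` onto `T'`, and
condensations from `[s_i,·)` onto `[s_{i-1},·)` for all `i ≥ 2`, then `T` is not
reversible; moreover `N` is a critical node of `T`. -/
theorem stmt14 {T : Type u} [PartialOrder T] (hT : IsTree T)
    (N : Set T) (hN : IsNode N) (s : ℕ → T) (hs : Function.Injective s)
    (hsN : ∀ i : ℕ, s i ∈ N) (T' : Set T) (hT' : T' ⊆ Set.Ici (s 0))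
    (h0 : CondOn (Set.Ici (s 0)) (Set.Ici (s 0) \ T'))
    (h1 : CondOn (Set.Ici (s 1)) T')
    (h2 : ∀ i : ℕ, 2 ≤ i → CondOn (Set.Ici (s i)) (Set.Ici (s (i - 1)))) :
    ¬ Reversible T ∧ IsCriticalNode N := by
  obtain ⟨t, rfl⟩ := hN
  have hIio : ∀ i j, Iio (s i) = Iio (s j) := fun i j => (hsN i).trans (hsN j).symm
  obtain ⟨g, hg, hgU, hgid, i, hi⟩ := exists_isCond_lt_apply hT hs hIio hT' h0 h1 h2
  have hUN : ⋃ i, Ici (s i) ⊆ upClo {x | Iio x = Iio t} :=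
    iUnion_subset fun i x hx => ⟨s i, hsN i, hx⟩
  obtain ⟨hS, hSc⟩ := mapsTo_and_mapsTo_compl_of_eqOn_compl hgU hgid hUN
  have hmem : ∀ j, s j ∈ upClo {x | Iio x = Iio t} := fun j => ⟨s j, hsN j, le_rfl⟩
  have hIio' : Iio (⟨s i, hmem i⟩ : upClo _) = Iio ⟨s 0, hmem 0⟩ :=
    Set.ext fun x => Set.ext_iff.1 (hIio i 0) x
  exact ⟨not_reversible_of_treeHt_lt hT hg (treeHt_lt_of_Iio_eq_of_lt hT (hIio i 0) hi),
    ⟨t, rfl⟩, _, hg.restrict hS hSc, ⟨s i, hmem i⟩, hsN i,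
    treeHt_lt_of_Iio_eq_of_lt (hT.subtype _) hIio' hi⟩
end
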